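/- arXiv:2604.15803 — 5 statements merged into one kernel-verified Lean document; each statement's English description precedes it below -/
import Mathlib

section
/- Let G be a countable discrete group, H ≤ G a subgroup, X = G/H, and let μ be a probability measure on G such that r_q(μ) > 0 for every q ∈ (1,2]. Then the function p ↦ −p·log r_{p/(p−1)}(μ) is monotonically increasing on [2,∞); that is, whenever 2 ≤ p₀ ≤ p₁ one has −p₀·log r_{p₀/(p₀−1)}(μ) ≤ −p₁·log r_{p₁/(p₁−1)}(μ). -/
open scoped ENNReal
open Filter Topology

noncomputable section

namespace PaperRD

variable {G : Type*} [Group G]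

/-- The fiber summation (push-forward) `π_# f` of a real-valued function on `G`
along the projection `G → G ⧸ H` onto the space of left cosets. -/
def fiberSum (H : Subgroup G) (f : G → ℝ) (x : G ⧸ H) : ℝ :=
  ∑' g : {g : G // (QuotientGroup.mk g : G ⧸ H) = x}, f (g : G)

/-- The `ℓ^q`-norm (valued in `ℝ≥0∞`) of a function on a type. -/
def lqNorm {X : Type*} {E : Type*} [Norm E] (q : ℝ) (ξ : X → E) : ℝ≥0∞ :=
  (∑' x : X, ENNReal.ofReal ‖ξ x‖ ^ q) ^ (1 / q)

/-- The quasi-regular convolution operator `λ_X(f)` acting on functions on `G ⧸ H`: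
`(λ_X(f)ξ)(x) = ∑_{g ∈ G} f(g) ξ(g⁻¹ x)`. -/
def lam (H : Subgroup G) (f : G → ℂ) (ξ : G ⧸ H → ℂ) (x : G ⧸ H) : ℂ :=
  ∑' g : G, f g * ξ ((g⁻¹ : G) • x)

/-- Operator norm (in `ℝ≥0∞`) of a map on functions, with respect to the `ℓ^q` norms:
the supremum of `‖Tξ‖_q` over the unit ball. -/
def opNorm {X : Type*} (q : ℝ) (T : (X → ℂ) → (X → ℂ)) : ℝ≥0∞ :=
  ⨆ ξ : {ξ : X → ℂ // lqNorm q ξ ≤ 1}, lqNorm q (T (ξ : X → ℂ))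

/-- The spectral radius `r_q(μ) = lim_n ‖T_q^n‖^{1/n}`; since the sequence of norms is
submultiplicative the limit exists and equals `inf_n ‖T_q^n‖^{1/n}`, which we take as
the definition. -/
def specRad (H : Subgroup G) (μ : G → ℝ) (q : ℝ) : ℝ :=
  (⨅ n : ℕ, opNorm q ((lam H (fun g => (μ g : ℂ)))^[n + 1]) ^ (1 / (n + 1 : ℝ))).toReal

/-- `c(G,H;μ) = sup_{p ∈ [2,∞)} ( -p · log r_{p/(p-1)}(μ) )`. -/
def cval (H : Subgroup G) (μ : G → ℝ) : ℝ :=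
  sSup {y : ℝ | ∃ p : ℝ, 2 ≤ p ∧ y = -p * Real.log (specRad H μ (p / (p - 1)))}

/-- Convolution of real functions on `G`. -/
def conv (f φ : G → ℝ) (g : G) : ℝ :=
  ∑' y : G, f y * φ (y⁻¹ * g)

open scoped Classical in
/-- Convolution powers `μ^{*n}` (with `μ^{*0} = δ_e`). -/
def convPow (μ : G → ℝ) : ℕ → G → ℝ
  | 0 => fun g => if g = 1 then 1 else 0
  | n + 1 => conv μ (convPow μ n)

/-- `ν_n = π_#(μ^{*n}) = μ^{*n} * δ_{eH}`, the distribution at time `n` of the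
`μ`-random walk on `G ⧸ H` started at the base coset. -/
def walkDist (H : Subgroup G) (μ : G → ℝ) (n : ℕ) : G ⧸ H → ℝ :=
  fiberSum H (convPow μ n)

/-- Shannon entropy `H(ν) = -∑ ν log ν` (with the convention `0 log 0 = 0`,
automatic since `Real.log 0 = 0`). -/
def shannon {X : Type*} (ν : X → ℝ) : ℝ :=
  -∑' x : X, ν x * Real.log (ν x)

/-- Rényi entropy of order `α`: `H_α(ν) = (1/(1-α)) log ∑ ν(x)^α`. -/
def renyi {X : Type*} (α : ℝ) (ν : X → ℝ) : ℝ :=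
  (1 / (1 - α)) * Real.log (∑' x : X, ν x ^ α)

/-- Word length with respect to a generating set `S`. -/
def wordLength (S : Set G) (g : G) : ℕ :=
  sInf {n : ℕ | ∃ l : List G, (∀ s ∈ l, s ∈ S) ∧ l.length = n ∧ l.prod = g}

/-- The mixed `(2,1)`-norm of a function on `G` relative to the pair `(G,H)`:
`‖f‖_{(2,1)} = ( ∑_{x ∈ G/H} ( ∑_{g ∈ x} |f(g)| )² )^{1/2}`. -/
def norm21 (H : Subgroup G) (f : G → ℂ) : ℝ :=
  Real.sqrt (∑' x : G ⧸ H,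
    (∑' g : {g : G // (QuotientGroup.mk g : G ⧸ H) = x}, ‖f (g : G)‖) ^ 2)

/-- Convolution of complex functions on `G`. -/
def convC (f φ : G → ℂ) (g : G) : ℂ :=
  ∑' y : G, f y * φ (y⁻¹ * g)

/-- The Haagerup-type norm `‖f‖_h` for the pair `(G,H)`:
the supremum of `‖f ∗ φ‖_{(2,1)}` over finitely supported nonnegative `φ` with
`‖φ‖_{(2,1)} ≤ 1`. -/
def hNorm (H : Subgroup G) (f : G → ℂ) : ℝ :=
  sSup {r : ℝ | ∃ φ : G → ℝ, (Function.support φ).Finite ∧ (∀ y, 0 ≤ φ y) ∧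
    norm21 H (fun g => (φ g : ℂ)) ≤ 1 ∧
    r = norm21 H (convC f (fun g => (φ g : ℂ)))}

/-- The pair `(G,H)` has pair rapid decay w.r.t. the length `ℓ`, with exponent `s`. -/
def HasPairRDWith (H : Subgroup G) (ℓ : G → ℕ) (s : ℝ) : Prop :=
  ∃ C : ℝ, 0 < C ∧ ∀ f : G → ℂ, (Function.support f).Finite →
    hNorm H f ≤ C * norm21 H (fun g => f g * (((1 + (ℓ g : ℝ)) ^ s : ℝ) : ℂ))

/-- The pair `(G,H)` has pair rapid decay w.r.t. the length `ℓ`. -/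
def HasPairRD (H : Subgroup G) (ℓ : G → ℕ) : Prop :=
  ∃ s : ℝ, 0 < s ∧ HasPairRDWith H ℓ s

/-- Radial majorant `W(t) = sup { w(g) : ℓ(g) ≤ t }` of a weight `w`. -/
def radialMaj (ℓ : G → ℕ) (w : G → ℝ) (t : ℕ) : ℝ :=
  sSup (w '' {g : G | ℓ g ≤ t})

/-- The pair `(G,H)` satisfies subexponential Lorentz control (`SLC_subexp`)
w.r.t. the length `ℓ`: there is a weight `w ≥ 1` with `‖f‖_h ≤ C ‖f·w‖_{(2,1)}`
for all finitely supported `f`, whose radial majorant `W` satisfies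
`log W(t) / t → 0`. -/
def SLCsubexp (H : Subgroup G) (ℓ : G → ℕ) : Prop :=
  ∃ C : ℝ, 0 < C ∧ ∃ w : G → ℝ, (∀ g, 1 ≤ w g) ∧
    (∀ f : G → ℂ, (Function.support f).Finite →
      hNorm H f ≤ C * norm21 H (fun g => f g * (w g : ℂ))) ∧
    Tendsto (fun t : ℕ => Real.log (radialMaj ℓ w t) / (t : ℝ)) atTop (𝓝 0)

end PaperRD

/-!
Write `T = λ_X(μ)`. Since `μ ≥ 0`, `|T^n ξ| ≤ T^n |ξ|`, so `‖T^n‖_q` is the norm of `T^n` acting on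
nonnegative functions. There `T^n` is a positive operator, hence satisfies Hölder's inequality
pointwise, `T^n(f^(1-θ) g^θ) ≤ (T^n f)^(1-θ) (T^n g)^θ`; writing `η = f^(1-θ) g^θ` with
`f = η^(q/q₀)`, `g = η^(q/q₁)` gives Riesz–Thorin without constant,
`‖T^n‖_q ≤ ‖T^n‖_{q₀}^(1-θ) ‖T^n‖_{q₁}^θ` for `1/q = (1-θ)/q₀ + θ/q₁`.
Taking `q₁ = 1`, where `T^n` is a contraction because `μ` is a probability measure, yields
`r_q ≤ r_{q₀}^(1-θ)`. For `q_i = p_i/(p_i-1)` and `θ = 1 - p₀/p₁` this is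
`p₁ log r_{q₁} ≤ p₀ log r_{q₀}`.
-/

open MeasureTheory

namespace ENNReal

lemma tsum_rpow_mul_rpow_le {ι : Type*} (u v : ι → ℝ≥0∞) {s t : ℝ} (hs : 0 ≤ s) (ht : 0 ≤ t)
    (hst : s + t = 1) :
    ∑' i, u i ^ s * v i ^ t ≤ (∑' i, u i) ^ s * (∑' i, v i) ^ t := by
  let _ : MeasurableSpace ι := ⊤
  have _ : MeasurableSingletonClass ι := ⟨fun _ => trivial⟩
  simpa only [lintegral_count] using lintegral_mul_norm_pow_le (μ := Measure.count)
    (measurable_from_top (f := u)).aemeasurable measurable_from_top.aemeasurable hs ht hst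

lemma tsum_mul_rpow_le {ι : Type*} (u v : ι → ℝ≥0∞) {p q r : ℝ} (hq : 0 < q) (hr : 0 < r)
    (hpqr : 1 / p = 1 / q + 1 / r) :
    (∑' i, (u i * v i) ^ p) ^ (1 / p) ≤
      (∑' i, u i ^ q) ^ (1 / q) * (∑' i, v i ^ r) ^ (1 / r) := by
  let _ : MeasurableSpace ι := ⊤
  have _ : MeasurableSingletonClass ι := ⟨fun _ => trivial⟩
  have hp : 0 < p := one_div_pos.mp (hpqr ▸ by positivity)
  have hpq : p < q := (one_div_lt_one_div hq hp).mp (by rw [hpqr]; linarith [one_div_pos.mpr hr])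
  simpa only [lintegral_count, Pi.mul_apply] using lintegral_Lp_mul_le_Lq_mul_Lr hp hpq hpqr
    Measure.count (f := u) (g := v) measurable_from_top.aemeasurable
    measurable_from_top.aemeasurable

lemma tsum_ofReal_eq_one {ι : Type*} {μ : ι → ℝ} (hμ0 : ∀ i, 0 ≤ μ i) (hμ1 : HasSum μ 1) :
    ∑' i, ENNReal.ofReal (μ i) = 1 := by
  rw [← ofReal_tsum_of_nonneg hμ0 hμ1.summable, hμ1.tsum_eq, ofReal_one]

end ENNReal

namespace PaperRD

section PositiveOperators

variable {X : Type*}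

def ennLqNorm (q : ℝ) (η : X → ℝ≥0∞) : ℝ≥0∞ :=
  (∑' x, η x ^ q) ^ (1 / q)

lemma ennLqNorm_mono {q : ℝ} (hq : 0 ≤ q) {η η' : X → ℝ≥0∞} (h : ∀ x, η x ≤ η' x) :
    ennLqNorm q η ≤ ennLqNorm q η' := by
  unfold ennLqNorm
  gcongr with x
  exact h x

lemma ennLqNorm_mul_le {p q r : ℝ} (hq : 0 < q) (hr : 0 < r) (hpqr : 1 / p = 1 / q + 1 / r)
    (u v : X → ℝ≥0∞) :
    ennLqNorm p (fun x => u x * v x) ≤ ennLqNorm q u * ennLqNorm r v :=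
  ENNReal.tsum_mul_rpow_le u v hq hr hpqr

lemma ennLqNorm_rpow {q c : ℝ} (hc : 0 < c) (η : X → ℝ≥0∞) :
    ennLqNorm (q / c) (fun x => η x ^ c) = ennLqNorm q η ^ c := by
  simp only [ennLqNorm, ← ENNReal.rpow_mul]
  congr 1
  · exact tsum_congr fun x => by rw [mul_div_cancel₀ _ hc.ne']
  · field_simp

lemma ennLqNorm_one (η : X → ℝ≥0∞) : ennLqNorm 1 η = ∑' x, η x := by
  simp [ennLqNorm]

lemma le_one_of_ennLqNorm_le_one {q : ℝ} (hq : 0 < q) {η : X → ℝ≥0∞}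
    (h : ennLqNorm q η ≤ 1) (x : X) : η x ≤ 1 := by
  have hsum : ∑' y, η y ^ q ≤ 1 := by
    simpa [ennLqNorm, ← ENNReal.rpow_mul, hq.ne'] using ENNReal.rpow_le_one h hq.le
  rw [← ENNReal.rpow_le_rpow_iff hq, ENNReal.one_rpow]
  exact (ENNReal.le_tsum x).trans hsum

def posOpNorm (q : ℝ) (T : (X → ℝ≥0∞) → (X → ℝ≥0∞)) : ℝ≥0∞ :=
  ⨆ η : {η : X → ℝ≥0∞ // ennLqNorm q η ≤ 1}, ennLqNorm q (T η)

lemma ennLqNorm_le_posOpNorm {q : ℝ} {η : X → ℝ≥0∞} (hη : ennLqNorm q η ≤ 1)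
    (T : (X → ℝ≥0∞) → (X → ℝ≥0∞)) : ennLqNorm q (T η) ≤ posOpNorm q T :=
  le_iSup_of_le (⟨η, hη⟩ : {η : X → ℝ≥0∞ // ennLqNorm q η ≤ 1}) le_rfl

def IsHolderOp (T : (X → ℝ≥0∞) → (X → ℝ≥0∞)) : Prop :=
  ∀ (f g : X → ℝ≥0∞) {s t : ℝ}, 0 ≤ s → 0 ≤ t → s + t = 1 →
    ∀ x, T (fun y => f y ^ s * g y ^ t) x ≤ T f x ^ s * T g x ^ t

lemma IsHolderOp.iterate {T : (X → ℝ≥0∞) → (X → ℝ≥0∞)} (hT : IsHolderOp T)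
    (hT_mono : Monotone T) (n : ℕ) : IsHolderOp T^[n] := by
  induction n with
  | zero => exact fun f g s t _ _ _ x => le_rfl
  | succ n ih =>
    intro f g s t hs ht hst x
    simp only [Function.iterate_succ_apply']
    exact (hT_mono (fun y => ih f g hs ht hst y) x).trans (hT _ _ hs ht hst x)

theorem IsHolderOp.posOpNorm_interpolate_le {T : (X → ℝ≥0∞) → (X → ℝ≥0∞)} (hT : IsHolderOp T)
    {q₀ q₁ q θ : ℝ} (hq₀ : 0 < q₀) (hq₁ : 0 < q₁) (hθ₀ : 0 < θ) (hθ₁ : θ < 1)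
    (hq : 1 / q = (1 - θ) / q₀ + θ / q₁) :
    posOpNorm q T ≤ posOpNorm q₀ T ^ (1 - θ) * posOpNorm q₁ T ^ θ := by
  have hq_pos : 0 < q := one_div_pos.mp (hq ▸ by
    have := sub_pos.mpr hθ₁
    positivity)
  refine iSup_le fun ⟨η, hη⟩ => ?_
  -- split `η = f^(1-θ) g^θ` with `f, g` in the unit balls of `ℓ^q₀, ℓ^q₁`
  set f : X → ℝ≥0∞ := fun x => η x ^ (q / q₀)
  set g : X → ℝ≥0∞ := fun x => η x ^ (q / q₁)
  have hf : ennLqNorm q₀ f ≤ 1 := by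
    have := ennLqNorm_rpow (q := q) (div_pos hq_pos hq₀) η
    rw [div_div_cancel₀ hq_pos.ne'] at this
    exact this ▸ ENNReal.rpow_le_one hη (by positivity)
  have hg : ennLqNorm q₁ g ≤ 1 := by
    have := ennLqNorm_rpow (q := q) (div_pos hq_pos hq₁) η
    rw [div_div_cancel₀ hq_pos.ne'] at this
    exact this ▸ ENNReal.rpow_le_one hη (by positivity)
  have hη_eq : η = fun x => f x ^ (1 - θ) * g x ^ θ := by
    funext x
    rw [← ENNReal.rpow_mul, ← ENNReal.rpow_mul,
      ← ENNReal.rpow_add_of_nonneg _ _ (by have := sub_pos.mpr hθ₁; positivity) (by positivity)]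
    convert (ENNReal.rpow_one (η x)).symm using 2
    field_simp at hq ⊢
    linarith
  calc ennLqNorm q (T η)
      ≤ ennLqNorm q (fun x => T f x ^ (1 - θ) * T g x ^ θ) :=
        ennLqNorm_mono hq_pos.le (hη_eq ▸ hT f g (sub_pos.mpr hθ₁).le hθ₀.le (by ring))
    _ ≤ ennLqNorm (q₀ / (1 - θ)) (fun x => T f x ^ (1 - θ)) *
          ennLqNorm (q₁ / θ) (fun x => T g x ^ θ) :=
        ennLqNorm_mul_le (div_pos hq₀ (sub_pos.mpr hθ₁)) (div_pos hq₁ hθ₀)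
          (by rw [hq]; field_simp) _ _
    _ = ennLqNorm q₀ (T f) ^ (1 - θ) * ennLqNorm q₁ (T g) ^ θ := by
        rw [ennLqNorm_rpow (sub_pos.mpr hθ₁), ennLqNorm_rpow hθ₀]
    _ ≤ posOpNorm q₀ T ^ (1 - θ) * posOpNorm q₁ T ^ θ := by
        gcongr
        · exact ennLqNorm_le_posOpNorm hf T
        · exact ennLqNorm_le_posOpNorm hg T

lemma posOpNorm_iterate_le_one {q : ℝ} {T : (X → ℝ≥0∞) → (X → ℝ≥0∞)}
    (hT : ∀ η, ennLqNorm q (T η) ≤ ennLqNorm q η) (n : ℕ) : posOpNorm q T^[n] ≤ 1 := by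
  refine iSup_le fun ⟨η, hη⟩ => le_trans ?_ hη
  induction n with
  | zero => exact le_rfl
  | succ n ih => exact (Function.iterate_succ_apply' T n η ▸ hT _).trans ih

def posSpecRad (q : ℝ) (T : (X → ℝ≥0∞) → (X → ℝ≥0∞)) : ℝ≥0∞ :=
  ⨅ n : ℕ, posOpNorm q T^[n + 1] ^ (1 / (n + 1 : ℝ))

theorem posSpecRad_le_rpow {T : (X → ℝ≥0∞) → (X → ℝ≥0∞)} (hT : IsHolderOp T)
    (hT_mono : Monotone T) (hT_one : ∀ η, ennLqNorm 1 (T η) ≤ ennLqNorm 1 η)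
    {q₀ q θ : ℝ} (hq₀ : 0 < q₀) (hθ₀ : 0 < θ) (hθ₁ : θ < 1) (hq : 1 / q = (1 - θ) / q₀ + θ) :
    posSpecRad q T ≤ posSpecRad q₀ T ^ (1 - θ) := by
  rw [posSpecRad, posSpecRad, ← ENNReal.orderIsoRpow_apply (1 - θ) (sub_pos.mpr hθ₁),
    OrderIso.map_iInf]
  refine iInf_mono fun n => ?_
  have hn : (0 : ℝ) ≤ 1 / (n + 1 : ℝ) := by positivity
  calc posOpNorm q T^[n + 1] ^ (1 / (n + 1 : ℝ))
      ≤ (posOpNorm q₀ T^[n + 1] ^ (1 - θ) * posOpNorm 1 T^[n + 1] ^ θ) ^ (1 / (n + 1 : ℝ)) :=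
        ENNReal.rpow_le_rpow ((hT.iterate hT_mono _).posOpNorm_interpolate_le hq₀ one_pos hθ₀ hθ₁
          (by rw [hq, div_one])) hn
    _ ≤ (posOpNorm q₀ T^[n + 1] ^ (1 - θ)) ^ (1 / (n + 1 : ℝ)) := by
        gcongr
        exact mul_le_of_le_one_right' (ENNReal.rpow_le_one
          (posOpNorm_iterate_le_one hT_one _) hθ₀.le)
    _ = ENNReal.orderIsoRpow (1 - θ) (sub_pos.mpr hθ₁)
          (posOpNorm q₀ T^[n + 1] ^ (1 / (n + 1 : ℝ))) := by
        rw [ENNReal.orderIsoRpow_apply, ← ENNReal.rpow_mul, ← ENNReal.rpow_mul, mul_comm]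

end PositiveOperators

section ConvolutionOperator

variable {G X : Type*} [Group G] [MulAction G X]

def ennLam (K : G → ℝ≥0∞) (η : X → ℝ≥0∞) (x : X) : ℝ≥0∞ :=
  ∑' g, K g * η (g⁻¹ • x)

lemma ennLam_mono (K : G → ℝ≥0∞) : Monotone (ennLam (X := X) K) :=
  fun _ _ h _ => ENNReal.tsum_le_tsum fun _ => mul_le_mul_right (h _) _

lemma isHolderOp_ennLam (K : G → ℝ≥0∞) : IsHolderOp (ennLam (X := X) K) := by
  intro f g s t hs ht hst x
  calc ennLam K (fun y => f y ^ s * g y ^ t) x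
      = ∑' h, (K h * f (h⁻¹ • x)) ^ s * (K h * g (h⁻¹ • x)) ^ t := tsum_congr fun h => by
        rw [ENNReal.mul_rpow_of_nonneg _ _ hs, ENNReal.mul_rpow_of_nonneg _ _ ht,
          mul_mul_mul_comm, ← ENNReal.rpow_add_of_nonneg _ _ hs ht, hst, ENNReal.rpow_one]
    _ ≤ ennLam K f x ^ s * ennLam K g x ^ t := ENNReal.tsum_rpow_mul_rpow_le _ _ hs ht hst

lemma tsum_ennLam (K : G → ℝ≥0∞) (η : X → ℝ≥0∞) :
    ∑' x, ennLam K η x = (∑' g, K g) * ∑' x, η x := by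
  simp only [ennLam]
  rw [ENNReal.tsum_comm, ← ENNReal.tsum_mul_right]
  refine tsum_congr fun g => ?_
  rw [ENNReal.tsum_mul_left]
  exact congrArg _ (Equiv.tsum_eq (MulAction.toPerm g⁻¹) η)

lemma ennLqNorm_one_ennLam_le {K : G → ℝ≥0∞} (hK : ∑' g, K g ≤ 1) (η : X → ℝ≥0∞) :
    ennLqNorm 1 (ennLam K η) ≤ ennLqNorm 1 η := by
  rw [ennLqNorm_one, ennLqNorm_one, tsum_ennLam]
  exact mul_le_of_le_one_left' hK

lemma ennLam_le_one {K : G → ℝ≥0∞} (hK : ∑' g, K g ≤ 1) {η : X → ℝ≥0∞} (hη : ∀ x, η x ≤ 1)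
    (x : X) : ennLam K η x ≤ 1 :=
  calc ennLam K η x ≤ ∑' g, K g * 1 := ENNReal.tsum_le_tsum fun _ => mul_le_mul_right (hη _) _
    _ ≤ 1 := by simpa using hK

end ConvolutionOperator

section MarkovOperator

variable {G : Type*} [Group G] {H : Subgroup G} {μ : G → ℝ}

lemma lqNorm_eq_ennLqNorm_toReal {X : Type*} (q : ℝ) {η : X → ℝ≥0∞} (hη : ∀ x, η x ≠ ∞) :
    lqNorm q (fun x => ((η x).toReal : ℂ)) = ennLqNorm q η := by
  simp only [lqNorm, ennLqNorm, Complex.norm_real, Real.norm_eq_abs, ENNReal.abs_toReal,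
    ENNReal.ofReal_toReal (hη _)]

lemma ofReal_norm_lam_le (hμ0 : ∀ g, 0 ≤ μ g) (ξ : G ⧸ H → ℂ) (x : G ⧸ H) :
    ENNReal.ofReal ‖lam H (fun g => (μ g : ℂ)) ξ x‖ ≤
      ennLam (ENNReal.ofReal ∘ μ) (fun y => ENNReal.ofReal ‖ξ y‖) x := by
  by_cases hs : Summable fun g => (μ g : ℂ) * ξ (g⁻¹ • x)
  · calc ENNReal.ofReal ‖lam H (fun g => (μ g : ℂ)) ξ x‖
        ≤ ENNReal.ofReal (∑' g, ‖(μ g : ℂ) * ξ (g⁻¹ • x)‖) :=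
          ENNReal.ofReal_le_ofReal (norm_tsum_le_tsum_norm hs.norm)
      _ = ennLam (ENNReal.ofReal ∘ μ) (fun y => ENNReal.ofReal ‖ξ y‖) x := by
          rw [ENNReal.ofReal_tsum_of_nonneg (fun _ => norm_nonneg _) hs.norm]
          refine tsum_congr fun g => ?_
          rw [norm_mul, Complex.norm_real, Real.norm_of_nonneg (hμ0 g),
            ENNReal.ofReal_mul (hμ0 g), Function.comp_apply]
  · simp [lam, tsum_eq_zero_of_not_summable hs]

lemma ofReal_norm_lam_iterate_le (hμ0 : ∀ g, 0 ≤ μ g) (ξ : G ⧸ H → ℂ) (n : ℕ) (x : G ⧸ H) :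
    ENNReal.ofReal ‖(lam H (fun g => (μ g : ℂ)))^[n] ξ x‖ ≤
      (ennLam (ENNReal.ofReal ∘ μ))^[n] (fun y => ENNReal.ofReal ‖ξ y‖) x := by
  induction n generalizing x with
  | zero => exact le_rfl
  | succ n ih =>
    rw [Function.iterate_succ_apply', Function.iterate_succ_apply']
    exact (ofReal_norm_lam_le hμ0 _ x).trans (ennLam_mono _ ih x)

lemma lam_toReal (hμ0 : ∀ g, 0 ≤ μ g) {η : G ⧸ H → ℝ≥0∞} (hη : ∀ x, η x ≠ ∞) (x : G ⧸ H) :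
    lam H (fun g => (μ g : ℂ)) (fun y => ((η y).toReal : ℂ)) x =
      ((ennLam (ENNReal.ofReal ∘ μ) η x).toReal : ℂ) := by
  rw [lam, ennLam, ENNReal.tsum_toReal_eq (f := fun g => (ENNReal.ofReal ∘ μ) g * η (g⁻¹ • x))
    fun g => ENNReal.mul_ne_top ENNReal.ofReal_ne_top (hη _), Complex.ofReal_tsum]
  refine tsum_congr fun g => ?_
  rw [ENNReal.toReal_mul, Function.comp_apply, ENNReal.toReal_ofReal (hμ0 g), Complex.ofReal_mul]

lemma lam_iterate_toReal (hμ0 : ∀ g, 0 ≤ μ g) (hμ1 : HasSum μ 1) {η : G ⧸ H → ℝ≥0∞}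
    (hη : ∀ x, η x ≤ 1) (n : ℕ) :
    (∀ x, (ennLam (ENNReal.ofReal ∘ μ))^[n] η x ≤ 1) ∧
      (lam H (fun g => (μ g : ℂ)))^[n] (fun y => ((η y).toReal : ℂ)) =
        fun x => (((ennLam (ENNReal.ofReal ∘ μ))^[n] η x).toReal : ℂ) := by
  induction n with
  | zero => exact ⟨hη, rfl⟩
  | succ n ih =>
    simp only [Function.iterate_succ_apply']
    refine ⟨ennLam_le_one (ENNReal.tsum_ofReal_eq_one hμ0 hμ1).le ih.1, ?_⟩
    rw [ih.2]
    exact funext (lam_toReal hμ0 fun x => ne_top_of_le_ne_top ENNReal.one_ne_top (ih.1 x))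

lemma opNorm_lam_iterate (hμ0 : ∀ g, 0 ≤ μ g) (hμ1 : HasSum μ 1) {q : ℝ} (hq : 0 < q) (n : ℕ) :
    opNorm q (lam H (fun g => (μ g : ℂ)))^[n] =
      posOpNorm q (ennLam (X := G ⧸ H) (ENNReal.ofReal ∘ μ))^[n] := by
  apply le_antisymm
  · refine iSup_le fun ⟨ξ, hξ⟩ => le_trans ?_ (ennLqNorm_le_posOpNorm hξ _)
    exact ennLqNorm_mono hq.le (ofReal_norm_lam_iterate_le hμ0 ξ n)
  · refine iSup_le fun ⟨η, hη⟩ => ?_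
    have hη_le := le_one_of_ennLqNorm_le_one hq hη
    have hfin := fun x => ne_top_of_le_ne_top ENNReal.one_ne_top (hη_le x)
    obtain ⟨hle, heq⟩ := lam_iterate_toReal hμ0 hμ1 (H := H) hη_le n
    have hξ : lqNorm q (fun x => ((η x).toReal : ℂ)) ≤ 1 := by
      rwa [lqNorm_eq_ennLqNorm_toReal q hfin]
    refine le_iSup_of_le (⟨_, hξ⟩ : {ξ : G ⧸ H → ℂ // lqNorm q ξ ≤ 1}) ?_
    rw [heq, lqNorm_eq_ennLqNorm_toReal q fun x => ne_top_of_le_ne_top ENNReal.one_ne_top (hle x)]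

lemma specRad_eq_toReal_posSpecRad (hμ0 : ∀ g, 0 ≤ μ g) (hμ1 : HasSum μ 1) {q : ℝ} (hq : 0 < q) :
    specRad H μ q = (posSpecRad q (ennLam (X := G ⧸ H) (ENNReal.ofReal ∘ μ))).toReal := by
  simp only [specRad, posSpecRad, opNorm_lam_iterate hμ0 hμ1 hq]

theorem specRad_le_rpow (hμ0 : ∀ g, 0 ≤ μ g) (hμ1 : HasSum μ 1) {q₀ q θ : ℝ} (hq₀ : 0 < q₀)
    (hθ₀ : 0 < θ) (hθ₁ : θ < 1) (hq : 1 / q = (1 - θ) / q₀ + θ) (hr : 0 < specRad H μ q₀) :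
    specRad H μ q ≤ specRad H μ q₀ ^ (1 - θ) := by
  have hq_pos : 0 < q := one_div_pos.mp (hq ▸ by have := sub_pos.mpr hθ₁; positivity)
  rw [specRad_eq_toReal_posSpecRad hμ0 hμ1 hq₀] at hr ⊢
  rw [specRad_eq_toReal_posSpecRad hμ0 hμ1 hq_pos, ENNReal.toReal_rpow]
  refine ENNReal.toReal_mono (ENNReal.rpow_ne_top_of_nonneg (sub_pos.mpr hθ₁).le
    (ENNReal.toReal_pos_iff.mp hr).2.ne) ?_
  exact posSpecRad_le_rpow (isHolderOp_ennLam _) (ennLam_mono _)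
    (ennLqNorm_one_ennLam_le (ENNReal.tsum_ofReal_eq_one hμ0 hμ1).le) hq₀ hθ₀ hθ₁ hq

end MarkovOperator

end PaperRD

theorem statement0_general {G : Type*} [Group G] (H : Subgroup G)
    (μ : G → ℝ) (hμ0 : ∀ g, 0 ≤ μ g) (hμ1 : HasSum μ 1)
    (hpos : ∀ q : ℝ, 1 < q → q ≤ 2 → 0 < PaperRD.specRad H μ q)
    (p₀ p₁ : ℝ) (hp₀ : 2 ≤ p₀) (hp : p₀ ≤ p₁) :
    -p₀ * Real.log (PaperRD.specRad H μ (p₀ / (p₀ - 1))) ≤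
      -p₁ * Real.log (PaperRD.specRad H μ (p₁ / (p₁ - 1))) := by
  rcases hp.eq_or_lt with rfl | hp_lt
  · exact le_rfl
  have hconj : ∀ p : ℝ, 2 ≤ p → 1 < p / (p - 1) ∧ p / (p - 1) ≤ 2 := fun p hp => by
    have : 0 < p - 1 := by linarith
    rw [lt_div_iff₀ this, div_le_iff₀ this]
    constructor <;> linarith
  obtain ⟨hq₀, hq₀'⟩ := hconj p₀ hp₀
  obtain ⟨hq₁, hq₁'⟩ := hconj p₁ (hp₀.trans hp)
  have hp₀_pos : 0 < p₀ := by linarith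
  have hp₁_pos : 0 < p₁ := by linarith
  have hr₀ := hpos _ hq₀ hq₀'
  -- `θ = 1 - p₀/p₁` solves `1/q₁ = (1-θ)/q₀ + θ` for `q_i = p_i/(p_i-1)`
  have hle := PaperRD.specRad_le_rpow (θ := 1 - p₀ / p₁) (q := p₁ / (p₁ - 1)) hμ0 hμ1
    (by linarith) (by rw [sub_pos, div_lt_one hp₁_pos]; exact hp_lt)
    (by have := div_pos hp₀_pos hp₁_pos; linarith) (by field_simp; ring) hr₀
  have hlog := Real.log_le_log (hpos _ hq₁ hq₁') hle
  rw [Real.log_rpow hr₀, sub_sub_cancel] at hlog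
  have := mul_le_mul_of_nonneg_left hlog hp₁_pos.le
  rw [← mul_assoc, mul_div_cancel₀ _ hp₁_pos.ne'] at this
  linarith

/-- For a countable discrete group `G`, a subgroup `H ≤ G`, and a
probability measure `μ` on `G` with `r_q(μ) > 0` for all `q ∈ (1,2]`, the function
`p ↦ -p · log r_{p/(p-1)}(μ)` is monotonically increasing on `[2,∞)`. -/
theorem statement0 {G : Type*} [Group G] [Countable G] (H : Subgroup G)
    (μ : G → ℝ) (hμ0 : ∀ g, 0 ≤ μ g) (hμ1 : HasSum μ 1)
    (hpos : ∀ q : ℝ, 1 < q → q ≤ 2 → 0 < PaperRD.specRad H μ q)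
    (p₀ p₁ : ℝ) (hp₀ : 2 ≤ p₀) (hp : p₀ ≤ p₁) :
    -p₀ * Real.log (PaperRD.specRad H μ (p₀ / (p₀ - 1))) ≤
      -p₁ * Real.log (PaperRD.specRad H μ (p₁ / (p₁ - 1))) :=
  statement0_general H μ hμ0 hμ1 hpos p₀ p₁ hp₀ hp
end
end

section
/- Let G be a countable discrete group, H ≤ G a subgroup, X = G/H, and let μ be a finitely supported probability measure on G. Then liminf_{n→∞} H(ν_n)/n ≥ c(G,H;μ), where ν_n is the distribution on X of the μ-random walk started at the base coset. -/
open scoped ENNReal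
open Filter Topology

noncomputable section

/-!
Put `q = p / (p - 1)` and `T = λ_X(μ)`. The walk distribution is `ν_n = Tⁿ δ_o`, so
`‖ν_n‖_q ≤ ‖Tⁿ‖`. Jensen's inequality bounds the Shannon entropy from below by
the Rényi entropy of order `q`, which is `q / (1 - q) · log ‖ν_n‖_q ≥ -p · log ‖Tⁿ‖`. The norms
`‖Tⁿ‖` are submultiplicative, so by Fekete's lemma `log ‖Tⁿ‖ / n → log r_q(μ)`, and therefore
`liminf H(ν_n) / n ≥ -p · log r_q(μ)`. Since `ν_n` lives on at most `|supp μ|ⁿ` cosets,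
`H(ν_n) / n ≤ log |supp μ|`, which keeps the liminf from being a junk value.
-/

namespace PaperRD

open Finset Real
open scoped Pointwise

variable {G : Type*} [Group G]

section Walk

variable {μ : G → ℝ} {s : Finset G}

lemma conv_eq_sum (hs : ∀ g ∉ s, μ g = 0) (φ : G → ℝ) (g : G) :
    conv μ φ g = ∑ y ∈ s, μ y * φ (y⁻¹ * g) :=
  tsum_eq_sum fun y hy => by rw [hs y hy, zero_mul]

lemma hasSum_conv (hs : ∀ g ∉ s, μ g = 0) (hμs : ∑ g ∈ s, μ g = 1) {φ : G → ℝ} {a : ℝ}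
    (hφ : HasSum φ a) : HasSum (conv μ φ) a := by
  have hterm (y : G) : HasSum (fun g => μ y * φ (y⁻¹ * g)) (μ y * a) :=
    ((Equiv.mulLeft y⁻¹).hasSum_iff.2 hφ).mul_left (μ y)
  have h := hasSum_sum fun y (_ : y ∈ s) => hterm y
  rwa [← Finset.sum_mul, hμs, one_mul, ← funext (conv_eq_sum hs φ)] at h

lemma hasSum_convPow (hs : ∀ g ∉ s, μ g = 0) (hμs : ∑ g ∈ s, μ g = 1) (n : ℕ) :
    HasSum (convPow μ n) 1 := by
  induction n with
  | zero => classical exact hasSum_ite_eq (1 : G) (1 : ℝ)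
  | succ n ih => exact hasSum_conv hs hμs ih

lemma convPow_nonneg (hμ0 : ∀ g, 0 ≤ μ g) (n : ℕ) (g : G) : 0 ≤ convPow μ n g := by
  induction n generalizing g with
  | zero => unfold convPow; split_ifs <;> norm_num
  | succ n ih => exact tsum_nonneg fun y => mul_nonneg (hμ0 y) (ih _)

open scoped Classical in
lemma convPow_eq_zero_of_notMem (hs : ∀ g ∉ s, μ g = 0) (n : ℕ) {g : G} (hg : g ∉ s ^ n) :
    convPow μ n g = 0 := by
  induction n generalizing g with
  | zero => simp_all [convPow]
  | succ n ih =>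
    rw [convPow, conv_eq_sum hs]
    refine sum_eq_zero fun y hy => ?_
    rw [ih, mul_zero]
    intro h
    exact hg (by simpa [pow_succ'] using mul_mem_mul hy h)

variable (H : Subgroup G)

lemma hasSum_fiberSum {f : G → ℝ} {a : ℝ} (hf : HasSum f a) : HasSum (fiberSum H f) a :=
  HasSum.sigma ((Equiv.sigmaFiberEquiv ((↑) : G → G ⧸ H)).hasSum_iff.2 hf)
    fun _ => (hf.summable.subtype _).hasSum

lemma fiberSum_comp_mul_left (f : G → ℝ) (y : G) (x : G ⧸ H) :
    fiberSum H (fun g => f (y⁻¹ * g)) x = fiberSum H f (y⁻¹ • x) :=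
  Equiv.tsum_eq (Equiv.subtypeEquiv (p := fun g : G => (g : G ⧸ H) = x)
    (q := fun g : G => (g : G ⧸ H) = y⁻¹ • x) (Equiv.mulLeft y⁻¹)
    fun g => (smul_left_cancel_iff (y⁻¹ : G) : y⁻¹ • (g : G ⧸ H) = _ ↔ _).symm) fun g => f g

lemma fiberSum_conv (hs : ∀ g ∉ s, μ g = 0) {φ : G → ℝ} (hφ : Summable φ) (x : G ⧸ H) :
    fiberSum H (conv μ φ) x = ∑ y ∈ s, μ y * fiberSum H φ (y⁻¹ • x) := by
  have hterm (y : G) : Summable fun g : {g : G // (g : G ⧸ H) = x} => μ y * φ (y⁻¹ * g) :=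
    (((Equiv.mulLeft y⁻¹).summable_iff.2 hφ).subtype _).mul_left (μ y)
  simp only [fiberSum, conv_eq_sum hs]
  rw [Summable.tsum_finsetSum fun y _ => hterm y]
  refine sum_congr rfl fun y _ => ?_
  rw [tsum_mul_left]
  exact congrArg _ (fiberSum_comp_mul_left H φ y x)

lemma walkDist_succ (hs : ∀ g ∉ s, μ g = 0) (hμs : ∑ g ∈ s, μ g = 1) (n : ℕ) (x : G ⧸ H) :
    walkDist H μ (n + 1) x = ∑ y ∈ s, μ y * walkDist H μ n (y⁻¹ • x) :=
  fiberSum_conv H hs (hasSum_convPow hs hμs n).summable x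

lemma hasSum_walkDist (hs : ∀ g ∉ s, μ g = 0) (hμs : ∑ g ∈ s, μ g = 1) (n : ℕ) :
    HasSum (walkDist H μ n) 1 :=
  hasSum_fiberSum H (hasSum_convPow hs hμs n)

lemma walkDist_nonneg (hμ0 : ∀ g, 0 ≤ μ g) (n : ℕ) (x : G ⧸ H) : 0 ≤ walkDist H μ n x :=
  tsum_nonneg fun g => convPow_nonneg hμ0 n g

open scoped Classical in
lemma walkDist_eq_zero_of_notMem (hs : ∀ g ∉ s, μ g = 0) (n : ℕ) {x : G ⧸ H}
    (hx : x ∉ (s ^ n).image ((↑) : G → G ⧸ H)) : walkDist H μ n x = 0 := by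
  refine (tsum_congr fun g => convPow_eq_zero_of_notMem hs n fun hg => hx ?_).trans tsum_zero
  exact mem_image.2 ⟨g, hg, g.2⟩

open scoped Classical in
lemma sum_walkDist (hs : ∀ g ∉ s, μ g = 0) (hμs : ∑ g ∈ s, μ g = 1) (n : ℕ) :
    ∑ x ∈ (s ^ n).image ((↑) : G → G ⧸ H), walkDist H μ n x = 1 :=
  (hasSum_walkDist H hs hμs n).unique
    (hasSum_sum_of_ne_finset_zero fun _ hx => walkDist_eq_zero_of_notMem H hs n hx) |>.symm

end Walk

section Entropy

variable {X : Type*} {ν : X → ℝ} {F : Finset X}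

lemma shannon_eq_sum_negMulLog (hF : ∀ x ∉ F, ν x = 0) :
    shannon ν = ∑ x ∈ F, negMulLog (ν x) := by
  rw [shannon, tsum_eq_sum fun x hx => by rw [hF x hx, zero_mul], ← sum_neg_distrib]
  simp only [negMulLog, neg_mul]

lemma shannon_nonneg (hν0 : ∀ x, 0 ≤ ν x) (hF : ∀ x ∉ F, ν x = 0) (hν1 : ∑ x ∈ F, ν x = 1) :
    0 ≤ shannon ν := by
  rw [shannon_eq_sum_negMulLog hF]
  exact sum_nonneg fun x hx =>
    negMulLog_nonneg (hν0 x) (hν1 ▸ single_le_sum (fun y _ => hν0 y) hx)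

lemma shannon_le_log_card (hν0 : ∀ x, 0 ≤ ν x) (hF : ∀ x ∉ F, ν x = 0)
    (hν1 : ∑ x ∈ F, ν x = 1) : shannon ν ≤ log #F := by
  have hcard : (0 : ℝ) < #F := by
    rw [Nat.cast_pos, card_pos]
    exact nonempty_of_sum_ne_zero (hν1 ▸ one_ne_zero)
  have jensen := concaveOn_negMulLog.le_map_sum (t := F) (w := fun _ => (#F : ℝ)⁻¹) (p := ν)
    (fun _ _ => by positivity) (by simp [hcard.ne']) fun x _ => Set.mem_Ici.2 (hν0 x)
  rw [← smul_sum, ← smul_sum, hν1, smul_eq_mul, smul_eq_mul, mul_one, negMulLog, log_inv,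
    neg_mul_neg, mul_le_mul_iff_right₀ (inv_pos.2 hcard)] at jensen
  rwa [shannon_eq_sum_negMulLog hF]

lemma renyi_le_shannon {q : ℝ} (hq : 1 < q) (hν0 : ∀ x, 0 ≤ ν x) (hF : ∀ x ∉ F, ν x = 0)
    (hν1 : ∑ x ∈ F, ν x = 1) : renyi q ν ≤ shannon ν := by
  classical
  -- `log` is concave only on `(0, ∞)`, so Jensen is applied on the positive support `P`
  set P := F.filter (0 < ν ·)
  have hP (x) (hx : x ∉ P) : ν x = 0 := by
    by_cases hxF : x ∈ F
    · exact le_antisymm (not_lt.1 fun h => hx (mem_filter.2 ⟨hxF, h⟩)) (hν0 x)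
    · exact hF x hxF
  have hpos (x) (hx : x ∈ P) : 0 < ν x := (mem_filter.1 hx).2
  have hP1 : ∑ x ∈ P, ν x = 1 := by
    rwa [← sum_subset (filter_subset _ F) fun x _ hx => hP x hx] at hν1
  have jensen := strictConcaveOn_log_Ioi.concaveOn.le_map_sum (t := P) (w := ν)
    (p := fun x => ν x ^ (q - 1)) (fun x _ => hν0 x) hP1 fun x hx => rpow_pos_of_pos (hpos x hx) _
  have hL : ∑ x ∈ P, ν x • log (ν x ^ (q - 1)) = (1 - q) * shannon ν := by
    rw [shannon_eq_sum_negMulLog hP, mul_sum]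
    refine sum_congr rfl fun x hx => ?_
    rw [smul_eq_mul, log_rpow (hpos x hx), negMulLog]
    ring
  have hR : ∑ x ∈ P, ν x • ν x ^ (q - 1) = ∑' x, ν x ^ q := by
    rw [tsum_eq_sum fun x hx => by rw [hP x hx, zero_rpow (by linarith)]]
    refine sum_congr rfl fun x hx => ?_
    rw [smul_eq_mul, ← rpow_one_add' (hν0 x) (by linarith), add_sub_cancel]
  rw [hL, hR] at jensen
  rw [renyi, one_div_mul_eq_div, div_le_iff_of_neg (by linarith)]
  linarith

end Entropy

section LqNorm

variable {X : Type*} {q : ℝ}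

lemma lqNorm_smul (hq : 0 < q) (c : ℂ) (ξ : X → ℂ) :
    lqNorm q (c • ξ) = ENNReal.ofReal ‖c‖ * lqNorm q ξ := by
  have hterm (x : X) : ENNReal.ofReal ‖(c • ξ) x‖ ^ q
      = ENNReal.ofReal ‖c‖ ^ q * ENNReal.ofReal ‖ξ x‖ ^ q := by
    rw [Pi.smul_apply, norm_smul, ENNReal.ofReal_mul (norm_nonneg c),
      ENNReal.mul_rpow_of_nonneg _ _ hq.le]
  rw [lqNorm, lqNorm, tsum_congr hterm, ENNReal.tsum_mul_left,
    ENNReal.mul_rpow_of_nonneg _ _ (by positivity), ← ENNReal.rpow_mul, mul_one_div_cancel hq.ne',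
    ENNReal.rpow_one]

lemma eq_zero_of_lqNorm_eq_zero (hq : 0 < q) {ξ : X → ℂ} (h : lqNorm q ξ = 0) : ξ = 0 := by
  rw [lqNorm, ENNReal.rpow_eq_zero_iff_of_pos (by positivity), ENNReal.tsum_eq_zero] at h
  funext x
  simpa [ENNReal.rpow_eq_zero_iff, hq, hq.not_gt] using h x

lemma lqNorm_iterate_le {T : (X → ℂ) → X → ℂ} (hT : ∀ ξ, lqNorm q (T ξ) ≤ lqNorm q ξ) (n : ℕ)
    (ξ : X → ℂ) : lqNorm q (T^[n] ξ) ≤ lqNorm q ξ := by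
  induction n with
  | zero => exact le_rfl
  | succ n ih =>
    rw [Function.iterate_succ_apply']
    exact (hT _).trans ih

lemma le_opNorm (T : (X → ℂ) → X → ℂ) {ξ : X → ℂ} (hξ : lqNorm q ξ ≤ 1) :
    lqNorm q (T ξ) ≤ opNorm q T :=
  le_iSup_of_le (⟨ξ, hξ⟩ : {ξ : X → ℂ // lqNorm q ξ ≤ 1}) le_rfl

lemma opNorm_iterate_le_one {T : (X → ℂ) → X → ℂ} (hT : ∀ ξ, lqNorm q (T ξ) ≤ lqNorm q ξ)
    (n : ℕ) : opNorm q T^[n] ≤ 1 :=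
  iSup_le fun ξ => (lqNorm_iterate_le hT n ξ).trans ξ.2

lemma lqNorm_apply_le_opNorm_mul {T : (X → ℂ) → X → ℂ} (hT : ∀ c : ℂ, Function.Commute T (c • ·))
    (hq : 0 < q) {η : X → ℂ} (hη : lqNorm q η ≠ ⊤) :
    lqNorm q (T η) ≤ opNorm q T * lqNorm q η := by
  rcases eq_or_ne (lqNorm q η) 0 with h0 | h0
  · have hη0 : η = (0 : ℂ) • η := by rw [zero_smul, eq_zero_of_lqNorm_eq_zero hq h0]
    rw [hη0, (hT 0).eq, lqNorm_smul hq]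
    simp
  · set c := (lqNorm q η).toReal
    have hc : 0 < c := ENNReal.toReal_pos h0 hη
    have hcη : ENNReal.ofReal c = lqNorm q η := ENNReal.ofReal_toReal hη
    have hξ : lqNorm q (((c⁻¹ : ℝ) : ℂ) • η) = 1 := by
      rw [lqNorm_smul hq, Complex.norm_real, norm_inv, Real.norm_of_nonneg hc.le, ← hcη,
        ← ENNReal.ofReal_mul (by positivity), inv_mul_cancel₀ hc.ne', ENNReal.ofReal_one]
    have hη' : η = (c : ℂ) • ((c⁻¹ : ℝ) : ℂ) • η := by
      rw [smul_smul, ← Complex.ofReal_mul, mul_inv_cancel₀ hc.ne', Complex.ofReal_one, one_smul]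
    calc lqNorm q (T η) = ENNReal.ofReal c * lqNorm q (T (((c⁻¹ : ℝ) : ℂ) • η)) := by
          rw [hη', (hT _).eq, lqNorm_smul hq, ← hη', Complex.norm_real, Real.norm_of_nonneg hc.le]
      _ ≤ lqNorm q η * opNorm q T := by
          rw [hcη]
          exact mul_le_mul_right (le_opNorm T hξ.le) _
      _ = opNorm q T * lqNorm q η := mul_comm _ _

lemma opNorm_comp_le {T S : (X → ℂ) → X → ℂ} (hT : ∀ c : ℂ, Function.Commute T (c • ·))
    (hq : 0 < q) (hS : opNorm q S ≠ ⊤) : opNorm q (T ∘ S) ≤ opNorm q T * opNorm q S :=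
  iSup_le fun ξ =>
    (lqNorm_apply_le_opNorm_mul hT hq (ne_top_of_le_ne_top hS (le_opNorm S ξ.2))).trans
      (mul_le_mul_right (le_opNorm S ξ.2) _)

lemma lqNorm_ofReal_rpow (hq : 0 < q) {ν : X → ℝ} (hν : ∀ x, 0 ≤ ν x) :
    lqNorm q (fun x => (ν x : ℂ)) ^ q = ∑' x, ENNReal.ofReal (ν x ^ q) := by
  rw [lqNorm, ← ENNReal.rpow_mul, one_div_mul_cancel hq.ne', ENNReal.rpow_one]
  refine tsum_congr fun x => ?_
  rw [Complex.norm_real, Real.norm_of_nonneg (hν x), ENNReal.ofReal_rpow_of_nonneg (hν x) hq.le]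

lemma lqNorm_ofReal_le_one (hq : 1 ≤ q) {ν : X → ℝ} (hν0 : ∀ x, 0 ≤ ν x) (hν1 : HasSum ν 1) :
    lqNorm q (fun x => (ν x : ℂ)) ≤ 1 := by
  have hq0 : 0 < q := by linarith
  rw [← ENNReal.rpow_le_rpow_iff hq0, lqNorm_ofReal_rpow hq0 hν0, ENNReal.one_rpow,
    ← ENNReal.ofReal_one, ← hν1.tsum_eq, ENNReal.ofReal_tsum_of_nonneg hν0 hν1.summable]
  exact ENNReal.tsum_le_tsum fun x => ENNReal.ofReal_le_ofReal <|
    rpow_le_self_of_le_one (hν0 x) (le_hasSum hν1 x fun y _ => hν0 y) hq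

lemma tsum_rpow_le_of_lqNorm_le (hq : 0 < q) {ν : X → ℝ} (hν : ∀ x, 0 ≤ ν x) {A : ℝ≥0∞}
    (hA : A ≠ ⊤) (h : lqNorm q (fun x => (ν x : ℂ)) ≤ A) : ∑' x, ν x ^ q ≤ A.toReal ^ q := by
  have hpow := ENNReal.rpow_le_rpow h hq.le
  rw [lqNorm_ofReal_rpow hq hν] at hpow
  calc ∑' x, ν x ^ q = (∑' x, ENNReal.ofReal (ν x ^ q)).toReal := by
        rw [ENNReal.tsum_toReal_eq fun _ => ENNReal.ofReal_ne_top]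
        exact tsum_congr fun x => (ENNReal.toReal_ofReal (rpow_nonneg (hν x) q)).symm
    _ ≤ (A ^ q).toReal := ENNReal.toReal_mono (ENNReal.rpow_ne_top_of_nonneg hq.le hA) hpow
    _ = A.toReal ^ q := (ENNReal.toReal_rpow A q).symm

end LqNorm

theorem tendsto_log_div_of_submultiplicative {a : ℕ → ℝ} (ha : ∀ n, 0 < a n)
    (hmul : ∀ m n, a (m + n) ≤ a m * a n) (hr : 0 < ⨅ n : ℕ, a (n + 1) ^ (1 / (n + 1 : ℝ))) :
    Tendsto (fun n : ℕ => log (a n) / n) atTop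
      (𝓝 (log (⨅ n : ℕ, a (n + 1) ^ (1 / (n + 1 : ℝ))))) := by
  set r := ⨅ n : ℕ, a (n + 1) ^ (1 / (n + 1 : ℝ))
  have hsub : Subadditive fun n => log (a n) := fun m n => by
    rw [← log_mul (ha m).ne' (ha n).ne']
    exact log_le_log (ha _) (hmul m n)
  have hroot (n : ℕ) : log (a (n + 1) ^ (1 / (n + 1 : ℝ))) = log (a (n + 1)) / (n + 1 : ℕ) := by
    rw [log_rpow (ha _), Nat.cast_succ]
    ring
  have hlow (n : ℕ) : log r ≤ log (a (n + 1)) / (n + 1 : ℕ) := by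
    rw [← hroot]
    exact log_le_log hr (ciInf_le ⟨0, by rintro _ ⟨k, rfl⟩; exact rpow_nonneg (ha _).le _⟩ n)
  have hbdd : BddBelow (Set.range fun n : ℕ => log (a n) / n) := by
    refine ⟨min (log r) 0, ?_⟩
    rintro _ ⟨_ | n, rfl⟩
    · simp
    · exact (min_le_left _ _).trans (hlow n)
  have hlim : hsub.lim = log r := by
    refine le_antisymm ?_ ?_
    · rw [le_log_iff_exp_le hr]
      refine le_ciInf fun n => ?_
      rw [← exp_log (rpow_pos_of_pos (ha _) _), exp_le_exp, hroot]
      exact hsub.lim_le_div hbdd n.succ_ne_zero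
    · rw [Subadditive.lim]
      refine le_csInf ⟨_, Set.mem_image_of_mem _ (Set.mem_Ici.2 le_rfl)⟩ ?_
      rintro _ ⟨_ | n, hn, rfl⟩
      · exact absurd hn (by simp)
      · exact hlow n
  exact hlim ▸ hsub.tendsto_lim hbdd

section MarkovOperator

variable (H : Subgroup G) {μ : G → ℝ} {s : Finset G} {q : ℝ}

lemma lam_eq_sum (hs : ∀ g ∉ s, μ g = 0) (ξ : G ⧸ H → ℂ) (x : G ⧸ H) :
    lam H (fun g => (μ g : ℂ)) ξ x = ∑ g ∈ s, (μ g : ℂ) * ξ (g⁻¹ • x) :=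
  tsum_eq_sum fun g hg => by simp [hs g hg]

lemma commute_lam_smul (f : G → ℂ) (c : ℂ) : Function.Commute (lam H f) (c • ·) := fun ξ => by
  funext x
  simp only [lam, Pi.smul_apply, smul_eq_mul, ← tsum_mul_left, mul_left_comm c]

lemma lqNorm_lam_le (hq : 1 ≤ q) (hs : ∀ g ∉ s, μ g = 0) (hμ0 : ∀ g, 0 ≤ μ g)
    (hμs : ∑ g ∈ s, μ g = 1) (ξ : G ⧸ H → ℂ) :
    lqNorm q (lam H (fun g => (μ g : ℂ)) ξ) ≤ lqNorm q ξ := by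
  set w : G → ℝ≥0∞ := fun g => ENNReal.ofReal (μ g)
  set z : G → G ⧸ H → ℝ≥0∞ := fun g x => ENNReal.ofReal ‖ξ (g⁻¹ • x)‖
  have hw : ∑ g ∈ s, w g = 1 := by
    rw [← ENNReal.ofReal_sum_of_nonneg fun g _ => hμ0 g, hμs, ENNReal.ofReal_one]
  have htriangle (x : G ⧸ H) :
      ENNReal.ofReal ‖lam H (fun g => (μ g : ℂ)) ξ x‖ ≤ ∑ g ∈ s, w g * z g x := by
    rw [lam_eq_sum H hs]
    simp only [w, z, ← ENNReal.ofReal_mul (hμ0 _)]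
    rw [← ENNReal.ofReal_sum_of_nonneg fun g _ => mul_nonneg (hμ0 g) (norm_nonneg _)]
    refine ENNReal.ofReal_le_ofReal ((norm_sum_le _ _).trans_eq (sum_congr rfl fun g _ => ?_))
    rw [norm_mul, Complex.norm_real, Real.norm_of_nonneg (hμ0 g)]
  have htranslate (g : G) : ∑' x, z g x ^ q = ∑' x, ENNReal.ofReal ‖ξ x‖ ^ q :=
    Equiv.tsum_eq (MulAction.toPerm (g⁻¹ : G)) fun x => ENNReal.ofReal ‖ξ x‖ ^ q
  -- Jensen for `t ↦ t ^ q` with weights `μ`, then translation invariance of counting measure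
  have hpow : ∑' x, ENNReal.ofReal ‖lam H (fun g => (μ g : ℂ)) ξ x‖ ^ q
      ≤ ∑' x, ENNReal.ofReal ‖ξ x‖ ^ q :=
    calc _ ≤ ∑' x, ∑ g ∈ s, w g * z g x ^ q := ENNReal.tsum_le_tsum fun x =>
          (ENNReal.rpow_le_rpow (htriangle x) (by linarith)).trans
            (ENNReal.rpow_arith_mean_le_arith_mean_rpow s w (z · x) hw hq)
      _ = ∑ g ∈ s, w g * ∑' x, ENNReal.ofReal ‖ξ x‖ ^ q := by
          rw [Summable.tsum_finsetSum fun _ _ => ENNReal.summable]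
          exact sum_congr rfl fun g _ => by rw [ENNReal.tsum_mul_left, htranslate]
      _ = ∑' x, ENNReal.ofReal ‖ξ x‖ ^ q := by rw [← sum_mul, hw, one_mul]
  exact ENNReal.rpow_le_rpow hpow (by positivity)

lemma opNorm_iterate_lam_le_one (hq : 1 ≤ q) (hs : ∀ g ∉ s, μ g = 0) (hμ0 : ∀ g, 0 ≤ μ g)
    (hμs : ∑ g ∈ s, μ g = 1) (n : ℕ) : opNorm q (lam H (fun g => (μ g : ℂ)))^[n] ≤ 1 :=
  opNorm_iterate_le_one (lqNorm_lam_le H hq hs hμ0 hμs) n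

lemma lam_walkDist (hs : ∀ g ∉ s, μ g = 0) (hμs : ∑ g ∈ s, μ g = 1) (n : ℕ) :
    lam H (fun g => (μ g : ℂ)) (fun x => (walkDist H μ n x : ℂ))
      = fun x => (walkDist H μ (n + 1) x : ℂ) := by
  funext x
  rw [lam_eq_sum H hs, walkDist_succ H hs hμs, Complex.ofReal_sum]
  simp only [Complex.ofReal_mul]

lemma iterate_lam_walkDist_zero (hs : ∀ g ∉ s, μ g = 0) (hμs : ∑ g ∈ s, μ g = 1) (n : ℕ) :
    (lam H (fun g => (μ g : ℂ)))^[n] (fun x => (walkDist H μ 0 x : ℂ))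
      = fun x => (walkDist H μ n x : ℂ) := by
  induction n with
  | zero => rfl
  | succ n ih => rw [Function.iterate_succ_apply', ih, lam_walkDist H hs hμs]

lemma tsum_rpow_walkDist_le (hq : 1 ≤ q) (hs : ∀ g ∉ s, μ g = 0) (hμ0 : ∀ g, 0 ≤ μ g)
    (hμs : ∑ g ∈ s, μ g = 1) (n : ℕ) :
    ∑' x, walkDist H μ n x ^ q ≤ (opNorm q (lam H (fun g => (μ g : ℂ)))^[n]).toReal ^ q := by
  refine tsum_rpow_le_of_lqNorm_le (by linarith) (walkDist_nonneg H hμ0 n)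
    (ne_top_of_le_ne_top ENNReal.one_ne_top (opNorm_iterate_lam_le_one H hq hs hμ0 hμs n)) ?_
  rw [← iterate_lam_walkDist_zero H hs hμs]
  exact le_opNorm _
    (lqNorm_ofReal_le_one hq (walkDist_nonneg H hμ0 0) (hasSum_walkDist H hs hμs 0))

lemma tsum_rpow_walkDist_pos (hq : 0 < q) (hs : ∀ g ∉ s, μ g = 0) (hμ0 : ∀ g, 0 ≤ μ g)
    (hμs : ∑ g ∈ s, μ g = 1) (n : ℕ) : 0 < ∑' x, walkDist H μ n x ^ q := by
  classical
  have hsum1 := hasSum_walkDist H hs hμs n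
  obtain ⟨x, hx⟩ : ∃ x, walkDist H μ n x ≠ 0 := by
    by_contra! h
    rw [show walkDist H μ n = 0 from funext h] at hsum1
    exact one_ne_zero (hsum1.unique hasSum_zero)
  have hsum : Summable fun x => walkDist H μ n x ^ q :=
    summable_of_ne_finset_zero (s := (s ^ n).image ((↑) : G → G ⧸ H)) fun x hx => by
      rw [walkDist_eq_zero_of_notMem H hs n hx, zero_rpow hq.ne']
  exact hsum.tsum_pos (fun y => rpow_nonneg (walkDist_nonneg H hμ0 n y) q) x
    (rpow_pos_of_pos ((walkDist_nonneg H hμ0 n x).lt_of_ne' hx) q)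

lemma opNorm_iterate_lam_pos (hq : 1 ≤ q) (hs : ∀ g ∉ s, μ g = 0) (hμ0 : ∀ g, 0 ≤ μ g)
    (hμs : ∑ g ∈ s, μ g = 1) (n : ℕ) :
    0 < (opNorm q (lam H (fun g => (μ g : ℂ)))^[n]).toReal := by
  refine ENNReal.toReal_nonneg.lt_of_ne fun h => ?_
  have := (tsum_rpow_walkDist_pos H (by linarith) hs hμ0 hμs n).trans_le
    (tsum_rpow_walkDist_le H hq hs hμ0 hμs n)
  rw [← h, zero_rpow (by linarith)] at this
  exact this.false

lemma opNorm_iterate_lam_add_le (hq : 1 ≤ q) (hs : ∀ g ∉ s, μ g = 0) (hμ0 : ∀ g, 0 ≤ μ g)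
    (hμs : ∑ g ∈ s, μ g = 1) (m n : ℕ) :
    (opNorm q (lam H (fun g => (μ g : ℂ)))^[m + n]).toReal
      ≤ (opNorm q (lam H (fun g => (μ g : ℂ)))^[m]).toReal
        * (opNorm q (lam H (fun g => (μ g : ℂ)))^[n]).toReal := by
  have hfin (k : ℕ) : opNorm q (lam H (fun g => (μ g : ℂ)))^[k] ≠ ⊤ :=
    ne_top_of_le_ne_top ENNReal.one_ne_top (opNorm_iterate_lam_le_one H hq hs hμ0 hμs k)
  rw [← ENNReal.toReal_mul, Function.iterate_add]
  exact ENNReal.toReal_mono (ENNReal.mul_ne_top (hfin m) (hfin n))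
    (opNorm_comp_le (fun c => (commute_lam_smul H _ c).iterate_left m) (by linarith) (hfin n))

end MarkovOperator

section EntropyRate

variable (H : Subgroup G) {μ : G → ℝ} {s : Finset G} {q : ℝ}

lemma mul_log_opNorm_iterate_lam_le_shannon (hq : 1 < q) (hs : ∀ g ∉ s, μ g = 0)
    (hμ0 : ∀ g, 0 ≤ μ g) (hμs : ∑ g ∈ s, μ g = 1) (n : ℕ) :
    q / (1 - q) * log (opNorm q (lam H (fun g => (μ g : ℂ)))^[n]).toReal
      ≤ shannon (walkDist H μ n) := by
  classical
  set a := (opNorm q (lam H (fun g => (μ g : ℂ)))^[n]).toReal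
  have ha : 0 < a := opNorm_iterate_lam_pos H hq.le hs hμ0 hμs n
  have hlog : log (∑' x, walkDist H μ n x ^ q) ≤ q * log a := by
    rw [← log_rpow ha]
    exact log_le_log (tsum_rpow_walkDist_pos H (by linarith) hs hμ0 hμs n)
      (tsum_rpow_walkDist_le H hq.le hs hμ0 hμs n)
  calc q / (1 - q) * log a = 1 / (1 - q) * (q * log a) := by ring
    _ ≤ renyi q (walkDist H μ n) :=
        mul_le_mul_of_nonpos_left hlog (one_div_nonpos.2 (by linarith))
    _ ≤ shannon (walkDist H μ n) :=
        renyi_le_shannon hq (walkDist_nonneg H hμ0 n)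
          (fun _ hx => walkDist_eq_zero_of_notMem H hs n hx) (sum_walkDist H hs hμs n)

lemma shannon_walkDist_div_mem_Icc (hs : ∀ g ∉ s, μ g = 0) (hμ0 : ∀ g, 0 ≤ μ g)
    (hμs : ∑ g ∈ s, μ g = 1) (n : ℕ) :
    shannon (walkDist H μ n) / n ∈ Set.Icc 0 (log #s) := by
  classical
  have hF (x : G ⧸ H) (hx : x ∉ (s ^ n).image ((↑) : G → G ⧸ H)) : walkDist H μ n x = 0 :=
    walkDist_eq_zero_of_notMem H hs n hx
  have hν1 := sum_walkDist H hs hμs n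
  refine ⟨div_nonneg (shannon_nonneg (walkDist_nonneg H hμ0 n) hF hν1) n.cast_nonneg, ?_⟩
  rcases n.eq_zero_or_pos with rfl | hn
  · simpa using log_natCast_nonneg #s
  have hcard : 0 < #((s ^ n).image ((↑) : G → G ⧸ H)) :=
    card_pos.2 (nonempty_of_sum_ne_zero (hν1 ▸ one_ne_zero))
  rw [div_le_iff₀ (by exact_mod_cast hn)]
  calc shannon (walkDist H μ n) ≤ log #((s ^ n).image ((↑) : G → G ⧸ H)) :=
        shannon_le_log_card (walkDist_nonneg H hμ0 n) hF hν1
    _ ≤ log ((#s : ℝ) ^ n) :=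
        log_le_log (by exact_mod_cast hcard) (by exact_mod_cast card_image_le.trans card_pow_le)
    _ = log #s * n := by rw [log_pow, mul_comm]

lemma specRad_eq_iInf (hq : 1 ≤ q) (hs : ∀ g ∉ s, μ g = 0) (hμ0 : ∀ g, 0 ≤ μ g)
    (hμs : ∑ g ∈ s, μ g = 1) :
    specRad H μ q = ⨅ n : ℕ,
      (opNorm q (lam H (fun g => (μ g : ℂ)))^[n + 1]).toReal ^ (1 / (n + 1 : ℝ)) := by
  rw [specRad, ENNReal.toReal_iInf fun n => ENNReal.rpow_ne_top_of_nonneg (by positivity)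
    (ne_top_of_le_ne_top ENNReal.one_ne_top (opNorm_iterate_lam_le_one H hq hs hμ0 hμs _))]
  simp only [ENNReal.toReal_rpow]

lemma isCoboundedUnder_shannon_walkDist_div (hs : ∀ g ∉ s, μ g = 0) (hμ0 : ∀ g, 0 ≤ μ g)
    (hμs : ∑ g ∈ s, μ g = 1) :
    IsCoboundedUnder (· ≥ ·) atTop fun n : ℕ => shannon (walkDist H μ n) / n :=
  isCoboundedUnder_ge_of_le atTop fun n => (shannon_walkDist_div_mem_Icc H hs hμ0 hμs n).2

lemma liminf_shannon_walkDist_div_nonneg (hs : ∀ g ∉ s, μ g = 0) (hμ0 : ∀ g, 0 ≤ μ g)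
    (hμs : ∑ g ∈ s, μ g = 1) :
    0 ≤ atTop.liminf fun n : ℕ => shannon (walkDist H μ n) / n :=
  le_liminf_of_le (isCoboundedUnder_shannon_walkDist_div H hs hμ0 hμs)
    (Eventually.of_forall fun n => (shannon_walkDist_div_mem_Icc H hs hμ0 hμs n).1)

lemma mul_log_specRad_le_liminf (hq : 1 < q) (hs : ∀ g ∉ s, μ g = 0) (hμ0 : ∀ g, 0 ≤ μ g)
    (hμs : ∑ g ∈ s, μ g = 1) :
    q / (1 - q) * log (specRad H μ q)
      ≤ atTop.liminf fun n : ℕ => shannon (walkDist H μ n) / n := by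
  rcases (show 0 ≤ specRad H μ q from ENNReal.toReal_nonneg).eq_or_lt with h0 | hpos
  · rw [← h0, log_zero, mul_zero]
    exact liminf_shannon_walkDist_div_nonneg H hs hμ0 hμs
  rw [specRad_eq_iInf H hq.le hs hμ0 hμs] at hpos ⊢
  have hlim := (tendsto_log_div_of_submultiplicative (opNorm_iterate_lam_pos H hq.le hs hμ0 hμs)
    (opNorm_iterate_lam_add_le H hq.le hs hμ0 hμs) hpos).const_mul (q / (1 - q))
  rw [← hlim.liminf_eq]
  refine liminf_le_liminf (Eventually.of_forall fun n => ?_) hlim.isBoundedUnder_ge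
    (isCoboundedUnder_shannon_walkDist_div H hs hμ0 hμs)
  rw [mul_div_assoc']
  exact div_le_div_of_nonneg_right (mul_log_opNorm_iterate_lam_le_shannon H hq hs hμ0 hμs n)
    n.cast_nonneg

end EntropyRate

end PaperRD

theorem statement2_general {G : Type*} [Group G] (H : Subgroup G)
    (μ : G → ℝ) (hμ0 : ∀ g, 0 ≤ μ g) (hμ1 : HasSum μ 1)
    (hfin : (Function.support μ).Finite) :
    PaperRD.cval H μ ≤
      Filter.atTop.liminf
        (fun n : ℕ => PaperRD.shannon (PaperRD.walkDist H μ n) / (n : ℝ)) := by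
  set s := hfin.toFinset
  have hs : ∀ g ∉ s, μ g = 0 := fun g hg => by simpa [s] using hg
  have hμs : ∑ g ∈ s, μ g = 1 := (hμ1.unique (hasSum_sum_of_ne_finset_zero hs)).symm
  refine Real.sSup_le ?_ (PaperRD.liminf_shannon_walkDist_div_nonneg H hs hμ0 hμs)
  rintro _ ⟨p, hp, rfl⟩
  have hq : 1 < p / (p - 1) := (one_lt_div (by linarith)).2 (by linarith)
  have hpq : p / (p - 1) / (1 - p / (p - 1)) = -p := by
    rw [one_sub_div (by linarith), sub_sub_cancel_left, div_div_div_cancel_right₀ (by linarith)]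
    ring
  simpa [hpq] using PaperRD.mul_log_specRad_le_liminf H hq hs hμ0 hμs

/-- For a countable discrete group `G`, a subgroup `H ≤ G`, and a
finitely supported probability measure `μ` on `G`, the lower asymptotic entropy of the
random walk on `G ⧸ H` dominates `c(G,H;μ)`:
`liminf_n H(ν_n)/n ≥ c(G,H;μ)`. -/
theorem statement2 {G : Type*} [Group G] [Countable G] (H : Subgroup G)
    (μ : G → ℝ) (hμ0 : ∀ g, 0 ≤ μ g) (hμ1 : HasSum μ 1)
    (hfin : (Function.support μ).Finite) :
    PaperRD.cval H μ ≤
      Filter.atTop.liminf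
        (fun n : ℕ => PaperRD.shannon (PaperRD.walkDist H μ n) / (n : ℝ)) :=
  statement2_general H μ hμ0 hμ1 hfin
end
end

section
/- Let G be a countable discrete group, H ≤ G a subgroup, and X = G/H. Let 0 < θ < 1 and let q = 2/(2−θ), i.e. 1/q = 1 − θ/2. Let w : G → (0,∞) be a strictly positive function and β₀, β₁ ∈ ℝ, and set β_θ = (1−θ)β₀ + θβ₁. Assume (E₀): M₀ := sup_{g∈G} w(g)^{−β₀} < ∞, and (E₁): there exists M₁ > 0 such that ‖λ_X(f)ξ‖₂ ≤ M₁·‖π_#(|f|·w^{β₁})‖₂·‖ξ‖₂ for every finitely supported f : G → ℂ and every ξ ∈ ℓ²(X). Then for every finitely supported f : G → ℂ and every ξ ∈ ℓ^q(X), ‖λ_X(f)ξ‖_q ≤ M₀^{1−θ}·M₁^{θ}·‖π_#(|f|·w^{β_θ})‖_q·‖ξ‖_q. -/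
open scoped ENNReal
open Filter Topology

noncomputable section

/-!
Write `u = |f| w^{β_θ}` and `ν = π_# u`. At every `g`, with `ν` evaluated at the coset of `g`,
`|f(g)| t = (c₀(g) t^q)^{1-θ} (c₁(g) t^{q/2})^θ` where `c₀ = u w^{-β₀} ν^{q-1}` and
`c₁ = u w^{-β₁} ν^{q/2-1}`: the powers of `w` cancel by the choice of `β_θ`, those of `ν` and `t`
by `1/q = 1 - θ/2`. Hölder's inequality in `g` then bounds `|λ_X(f)ξ|` pointwise by `S₀^{1-θ} S₁^θ`
with `S₀ = λ_X(c₀)|ξ|^q` and `S₁ = λ_X(c₁)|ξ|^{q/2}`. Since `π_#(u ν^{r-1}) = ν^r`, (E₀) gives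
`‖S₀‖₁ ≤ M₀ ‖ν‖_q^q ‖ξ‖_q^q`, and (E₁) applied to `c₁` and `|ξ|^{q/2}` gives
`‖S₁‖₂² ≤ M₁² ‖ν‖_q^q ‖ξ‖_q^q`. Hölder's inequality in `x`, with the exponents `(1-θ)q` and `θq/2`
that sum to `1`, combines the two bounds.
-/

open MeasureTheory in
theorem ENNReal.tsum_rpow_mul_rpow_le_s3 {ι : Type*} (a b : ι → ℝ≥0∞) {s t : ℝ} (hs : 0 ≤ s)
    (ht : 0 ≤ t) (hst : s + t = 1) :
    ∑' i, a i ^ s * b i ^ t ≤ (∑' i, a i) ^ s * (∑' i, b i) ^ t := by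
  let _ : MeasurableSpace ι := ⊤
  simpa only [lintegral_count' measurable_from_top] using
    lintegral_mul_norm_pow_le (μ := Measure.count) measurable_from_top.aemeasurable
      measurable_from_top.aemeasurable hs ht hst

theorem ENNReal.tsum_tsum_mul_smul_inv {G X : Type*} [Group G] [MulAction G X]
    (a : G → ℝ≥0∞) (b : X → ℝ≥0∞) :
    ∑' x, ∑' g, a g * b (g⁻¹ • x) = (∑' g, a g) * ∑' x, b x := by
  rw [ENNReal.tsum_comm, ← ENNReal.tsum_mul_right]
  refine tsum_congr fun g => ?_
  rw [ENNReal.tsum_mul_left]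
  exact congrArg _ ((MulAction.toPerm g⁻¹).tsum_eq b)

theorem ENNReal.ofReal_rpow_div_two_rpow_two {t q : ℝ} (ht : 0 ≤ t) (hq : 0 ≤ q) :
    ENNReal.ofReal (t ^ (q / 2)) ^ (2 : ℝ) = ENNReal.ofReal t ^ q := by
  rw [← ENNReal.ofReal_rpow_of_nonneg ht (by positivity), ← ENNReal.rpow_mul,
    div_mul_cancel₀ _ two_ne_zero]

section Interpolation

variable {G X : Type*} [Group G] [MulAction G X] {a c₀ c₁ : G → ℝ≥0∞} {b : X → ℝ≥0∞}
  {θ p q : ℝ}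

theorem ENNReal.tsum_mul_smul_inv_le_of_split (hθ0 : 0 ≤ θ) (hθ1 : θ ≤ 1)
    (hsplit : ∀ g y, a g * b y ≤ (c₀ g * b y ^ q) ^ (1 - θ) * (c₁ g * b y ^ (q / p)) ^ θ)
    (x : X) :
    ∑' g, a g * b (g⁻¹ • x) ≤
      (∑' g, c₀ g * b (g⁻¹ • x) ^ q) ^ (1 - θ) * (∑' g, c₁ g * b (g⁻¹ • x) ^ (q / p)) ^ θ :=
  (ENNReal.tsum_le_tsum fun g => hsplit g _).trans <|
    ENNReal.tsum_rpow_mul_rpow_le_s3 _ _ (by linarith) hθ0 (by ring)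

theorem ENNReal.tsum_rpow_le_of_split {A B V : ℝ≥0∞} (hθ0 : 0 ≤ θ) (hθ1 : θ ≤ 1) (hp : 0 < p)
    (hq : 0 < q) (hqp : (1 - θ) * q + θ * q / p = 1)
    (hsplit : ∀ g y, a g * b y ≤ (c₀ g * b y ^ q) ^ (1 - θ) * (c₁ g * b y ^ (q / p)) ^ θ)
    (h₀ : ∑' g, c₀ g ≤ A * V)
    (h₁ : ∑' x, (∑' g, c₁ g * b (g⁻¹ • x) ^ (q / p)) ^ p ≤ B ^ p * V * ∑' x, b x ^ q) :
    (∑' x, (∑' g, a g * b (g⁻¹ • x)) ^ q) ^ (1 / q) ≤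
      A ^ (1 - θ) * B ^ θ * V ^ (1 / q) * (∑' x, b x ^ q) ^ (1 / q) := by
  set N := ∑' x, b x ^ q
  have hs : 0 ≤ (1 - θ) * q := by nlinarith
  have ht : 0 ≤ θ * q / p := by positivity
  have hpt : ∀ x, (∑' g, a g * b (g⁻¹ • x)) ^ q ≤ (∑' g, c₀ g * b (g⁻¹ • x) ^ q) ^ ((1 - θ) * q) *
      ((∑' g, c₁ g * b (g⁻¹ • x) ^ (q / p)) ^ p) ^ (θ * q / p) := fun x => by
    refine (ENNReal.rpow_le_rpow (tsum_mul_smul_inv_le_of_split hθ0 hθ1 hsplit x) hq.le).trans_eq ?_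
    rw [ENNReal.mul_rpow_of_nonneg _ _ hq.le, ← ENNReal.rpow_mul, ← ENNReal.rpow_mul,
      ← ENNReal.rpow_mul, mul_div_cancel₀ _ hp.ne']
  have hsum : ∑' x, (∑' g, a g * b (g⁻¹ • x)) ^ q ≤
      (A * V * N) ^ ((1 - θ) * q) * (B ^ p * V * N) ^ (θ * q / p) := by
    refine (ENNReal.tsum_le_tsum hpt).trans <|
      (ENNReal.tsum_rpow_mul_rpow_le_s3 _ _ hs ht hqp).trans ?_
    rw [ENNReal.tsum_tsum_mul_smul_inv c₀ fun y => b y ^ q]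
    exact mul_le_mul' (ENNReal.rpow_le_rpow (mul_le_mul_left h₀ N) hs)
      (ENNReal.rpow_le_rpow h₁ ht)
  have hVN : (V * N) ^ ((1 - θ) * q) * (V * N) ^ (θ * q / p) = V * N := by
    rw [← ENNReal.rpow_add_of_nonneg _ _ hs ht, hqp, ENNReal.rpow_one]
  have hconst : (A * V * N) ^ ((1 - θ) * q) * (B ^ p * V * N) ^ (θ * q / p) =
      (A ^ (1 - θ) * B ^ θ) ^ q * (V * N) := by
    rw [mul_assoc A, mul_assoc (B ^ p), ENNReal.mul_rpow_of_nonneg _ _ hs,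
      ENNReal.mul_rpow_of_nonneg _ _ ht, ENNReal.mul_rpow_of_nonneg _ _ hq.le, ← ENNReal.rpow_mul,
      ← ENNReal.rpow_mul, ← ENNReal.rpow_mul, mul_div_cancel₀ _ hp.ne']
    conv_rhs => rw [← hVN]
    ring
  refine (ENNReal.rpow_le_rpow hsum (by positivity)).trans_eq ?_
  rw [hconst, ENNReal.mul_rpow_of_nonneg _ _ (by positivity), ← ENNReal.rpow_mul,
    mul_one_div_cancel hq.ne', ENNReal.rpow_one, ENNReal.mul_rpow_of_nonneg _ _ (by positivity),
    ← mul_assoc]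

end Interpolation

theorem Real.mul_eq_rpow_mul_rpow {a t κ₀ κ₁ θ p q : ℝ} (ha : 0 ≤ a) (ht : 0 ≤ t)
    (hκ₀ : 0 ≤ κ₀) (hκ₁ : 0 ≤ κ₁)
    (hκ : κ₀ ^ (1 - θ) * κ₁ ^ θ = 1) (hqp : (1 - θ) * q + θ * q / p = 1) :
    a * t = (a * κ₀ * t ^ q) ^ (1 - θ) * (a * κ₁ * t ^ (q / p)) ^ θ := by
  have ha' : a ^ (1 - θ) * a ^ θ = a := by
    rw [← Real.rpow_add' ha (by norm_num), sub_add_cancel, Real.rpow_one]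
  have ht' : (t ^ q) ^ (1 - θ) * (t ^ (q / p)) ^ θ = t := by
    have hexp : q * (1 - θ) + q / p * θ = 1 := by linear_combination hqp
    rw [← Real.rpow_mul ht, ← Real.rpow_mul ht, ← Real.rpow_add' ht (by rw [hexp]; norm_num),
      hexp, Real.rpow_one]
  rw [Real.mul_rpow (by positivity) (by positivity), Real.mul_rpow ha hκ₀,
    Real.mul_rpow (by positivity) (by positivity), Real.mul_rpow ha hκ₁]
  calc a * t = (a ^ (1 - θ) * a ^ θ) * (κ₀ ^ (1 - θ) * κ₁ ^ θ) *
        ((t ^ q) ^ (1 - θ) * (t ^ (q / p)) ^ θ) := by rw [ha', hκ, ht', mul_one]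
    _ = _ := by ring

namespace PaperRD

variable {G : Type*} [Group G] (H : Subgroup G)

theorem fiberSum_nonneg {u : G → ℝ} (hu : ∀ g, 0 ≤ u g) (x : G ⧸ H) : 0 ≤ fiberSum H u x :=
  tsum_nonneg fun _ => hu _

theorem le_fiberSum {u : G → ℝ} (hu : ∀ g, 0 ≤ u g) (hus : Summable u) (g : G) :
    u g ≤ fiberSum H u g :=
  (hus.subtype _).le_tsum (⟨g, rfl⟩ : {g' : G // (g' : G ⧸ H) = g}) fun _ _ => hu _

theorem tsum_ofReal_eq_tsum_ofReal_fiberSum {u : G → ℝ} (hu : ∀ g, 0 ≤ u g) (hus : Summable u) :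
    ∑' g, ENNReal.ofReal (u g) = ∑' x, ENNReal.ofReal (fiberSum H u x) := by
  rw [← ENNReal.tsum_fiberwise _ (QuotientGroup.mk : G → G ⧸ H)]
  refine tsum_congr fun x => ?_
  exact (ENNReal.ofReal_tsum_of_nonneg (fun _ => hu _) (hus.subtype _)).symm

theorem fiberSum_mul_rpow_sub_one {u : G → ℝ} (hu : ∀ g, 0 ≤ u g) {r : ℝ} (hr : r ≠ 0)
    (x : G ⧸ H) :
    fiberSum H (fun g => u g * fiberSum H u g ^ (r - 1)) x = fiberSum H u x ^ r := by
  have hν := fiberSum_nonneg H hu x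
  calc fiberSum H (fun g => u g * fiberSum H u g ^ (r - 1)) x
      = fiberSum H u x * fiberSum H u x ^ (r - 1) := by
        unfold fiberSum
        rw [← tsum_mul_right]
        exact tsum_congr fun g => by dsimp only; rw [g.2]
    _ = fiberSum H u x ^ r := by
        rw [← Real.rpow_one_add' hν (by simpa using hr), add_sub_cancel]

theorem ofReal_norm_lam_le_s3 {f : G → ℂ} (hf : (Function.support f).Finite) (ξ : G ⧸ H → ℂ)
    (x : G ⧸ H) :
    ENNReal.ofReal ‖lam H f ξ x‖ ≤
      ∑' g, ENNReal.ofReal ‖f g‖ * ENNReal.ofReal ‖ξ (g⁻¹ • x)‖ := by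
  have hs : Summable fun g => ‖f g * ξ (g⁻¹ • x)‖ :=
    summable_of_hasFiniteSupport <| hf.subset fun g hg => by
      simp_all
  calc ENNReal.ofReal ‖lam H f ξ x‖ ≤ ENNReal.ofReal (∑' g, ‖f g * ξ (g⁻¹ • x)‖) :=
        ENNReal.ofReal_le_ofReal (norm_tsum_le_tsum_norm hs)
    _ = _ := by
      rw [ENNReal.ofReal_tsum_of_nonneg (fun g => norm_nonneg _) hs]
      exact tsum_congr fun g => by rw [norm_mul, ENNReal.ofReal_mul (norm_nonneg _)]

theorem ofReal_norm_lam_ofReal {a : G → ℝ} (ha : ∀ g, 0 ≤ a g)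
    (ha_fin : (Function.support a).Finite) {b : G ⧸ H → ℝ} (hb : ∀ y, 0 ≤ b y) (x : G ⧸ H) :
    ENNReal.ofReal ‖lam H (fun g => (a g : ℂ)) (fun y => (b y : ℂ)) x‖ =
      ∑' g, ENNReal.ofReal (a g) * ENNReal.ofReal (b (g⁻¹ • x)) := by
  have hnn : ∀ g, 0 ≤ a g * b (g⁻¹ • x) := fun g => mul_nonneg (ha g) (hb _)
  have hs : Summable fun g => a g * b (g⁻¹ • x) :=
    summable_of_hasFiniteSupport <| ha_fin.subset fun g hg => by
      simp_all
  have hlam : lam H (fun g => (a g : ℂ)) (fun y => (b y : ℂ)) x =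
      ((∑' g, a g * b (g⁻¹ • x) : ℝ) : ℂ) := by
    rw [lam, Complex.ofReal_tsum]
    push_cast
    rfl
  rw [hlam, Complex.norm_real, Real.norm_of_nonneg (tsum_nonneg hnn),
    ENNReal.ofReal_tsum_of_nonneg hnn hs]
  exact tsum_congr fun g => ENNReal.ofReal_mul (ha g)

theorem lqNorm_lam_le_s3 {f : G → ℂ} (hf : (Function.support f).Finite) (ξ : G ⧸ H → ℂ)
    {q : ℝ} (hq : 0 ≤ q) :
    lqNorm q (lam H f ξ) ≤
      (∑' x, (∑' g, ENNReal.ofReal ‖f g‖ * ENNReal.ofReal ‖ξ (g⁻¹ • x)‖) ^ q) ^ (1 / q) :=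
  ENNReal.rpow_le_rpow (ENNReal.tsum_le_tsum fun x =>
    ENNReal.rpow_le_rpow (ofReal_norm_lam_le_s3 H hf ξ x) hq) (by positivity)

theorem tsum_rpow_le_of_lqNorm_le_s3 {X Y Z E F K : Type*} [Norm E] [Norm F] [Norm K]
    {φ : X → E} {ψ : Y → F} {χ : Z → K} {C : ℝ≥0∞} {p : ℝ} (hp : 0 < p)
    (h : lqNorm p φ ≤ C * lqNorm p ψ * lqNorm p χ) :
    ∑' x, ENNReal.ofReal ‖φ x‖ ^ p ≤
      C ^ p * (∑' y, ENNReal.ofReal ‖ψ y‖ ^ p) * ∑' z, ENNReal.ofReal ‖χ z‖ ^ p := by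
  have h' := ENNReal.rpow_le_rpow h hp.le
  simp only [lqNorm, ENNReal.mul_rpow_of_nonneg _ _ hp.le, ← ENNReal.rpow_mul,
    one_div_mul_cancel hp.ne', ENNReal.rpow_one] at h'
  exact h'

theorem interpolationWeights_rpow_mul_rpow_eq_one {θ p q β₀ β₁ w ν : ℝ} (hw : 0 < w) (hν : 0 < ν)
    (hqp : (1 - θ) * q + θ * q / p = 1) :
    (w ^ ((1 - θ) * β₀ + θ * β₁) * w ^ (-β₀) * ν ^ (q - 1)) ^ (1 - θ) *
      (w ^ ((1 - θ) * β₀ + θ * β₁) * w ^ (-β₁) * ν ^ (q / p - 1)) ^ θ = 1 := by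
  simp only [Real.rpow_def_of_pos hw, Real.rpow_def_of_pos hν, ← Real.exp_add, ← Real.exp_mul]
  rw [Real.exp_eq_one_iff]
  linear_combination Real.log ν * hqp

theorem ofReal_mul_ofReal_le_split {θ p q β₀ β₁ a t w ν : ℝ} (ha : 0 ≤ a) (ht : 0 ≤ t) (hw : 0 < w)
    (hν : a * w ^ ((1 - θ) * β₀ + θ * β₁) ≤ ν) (hθ0 : 0 ≤ θ) (hθ1 : θ ≤ 1) (hp : 0 ≤ p)
    (hq : 0 ≤ q) (hqp : (1 - θ) * q + θ * q / p = 1) :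
    ENNReal.ofReal a * ENNReal.ofReal t ≤
      (ENNReal.ofReal (a * w ^ ((1 - θ) * β₀ + θ * β₁) * w ^ (-β₀) * ν ^ (q - 1)) *
          ENNReal.ofReal t ^ q) ^ (1 - θ) *
        (ENNReal.ofReal (a * w ^ ((1 - θ) * β₀ + θ * β₁) * w ^ (-β₁) * ν ^ (q / p - 1)) *
          ENNReal.ofReal t ^ (q / p)) ^ θ := by
  have hν0 : 0 ≤ ν := le_trans (by positivity) hν
  have hreal : a * t ≤
      (a * w ^ ((1 - θ) * β₀ + θ * β₁) * w ^ (-β₀) * ν ^ (q - 1) * t ^ q) ^ (1 - θ) *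
      (a * w ^ ((1 - θ) * β₀ + θ * β₁) * w ^ (-β₁) * ν ^ (q / p - 1) * t ^ (q / p)) ^ θ := by
    rcases ha.eq_or_lt with rfl | ha
    · rw [zero_mul]
      positivity
    have hνpos : 0 < ν := lt_of_lt_of_le (by positivity) hν
    refine le_of_eq ?_
    simpa only [mul_assoc] using Real.mul_eq_rpow_mul_rpow ha.le ht (by positivity)
      (by positivity) (interpolationWeights_rpow_mul_rpow_eq_one hw hνpos hqp) hqp
  have hc₀ : 0 ≤ a * w ^ ((1 - θ) * β₀ + θ * β₁) * w ^ (-β₀) * ν ^ (q - 1) := by positivity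
  have hc₁ : 0 ≤ a * w ^ ((1 - θ) * β₀ + θ * β₁) * w ^ (-β₁) * ν ^ (q / p - 1) := by positivity
  rw [← ENNReal.ofReal_mul ha]
  refine (ENNReal.ofReal_le_ofReal hreal).trans_eq ?_
  rw [ENNReal.ofReal_mul (by positivity), ← ENNReal.ofReal_rpow_of_nonneg (by positivity)
      (by linarith), ← ENNReal.ofReal_rpow_of_nonneg (by positivity) hθ0,
    ENNReal.ofReal_mul hc₀, ENNReal.ofReal_mul hc₁,
    ENNReal.ofReal_rpow_of_nonneg ht hq, ENNReal.ofReal_rpow_of_nonneg ht (by positivity)]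

theorem tsum_ofReal_mul_fiberSum_rpow_le {u v : G → ℝ} {M r : ℝ} (hu : ∀ g, 0 ≤ u g)
    (hu_fin : (Function.support u).Finite) (hv : ∀ g, v g ≤ M) (hM : 0 ≤ M) (hr : 0 < r) :
    ∑' g, ENNReal.ofReal (u g * v g * fiberSum H u g ^ (r - 1)) ≤
      ENNReal.ofReal M * ∑' x, ENNReal.ofReal (fiberSum H u x) ^ r := by
  have hν := fiberSum_nonneg H hu
  have hs : Summable fun g => u g * fiberSum H u g ^ (r - 1) :=
    summable_of_hasFiniteSupport <| hu_fin.subset fun g hg => by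
      simp_all
  calc ∑' g, ENNReal.ofReal (u g * v g * fiberSum H u g ^ (r - 1))
      ≤ ∑' g, ENNReal.ofReal M * ENNReal.ofReal (u g * fiberSum H u g ^ (r - 1)) :=
        ENNReal.tsum_le_tsum fun g => by
          rw [← ENNReal.ofReal_mul hM]
          refine ENNReal.ofReal_le_ofReal ?_
          have := mul_nonneg (hu g) (Real.rpow_nonneg (hν g) (r - 1))
          nlinarith [hv g]
    _ = ENNReal.ofReal M * ∑' x, ENNReal.ofReal (fiberSum H u x) ^ r := by
        rw [ENNReal.tsum_mul_left, tsum_ofReal_eq_tsum_ofReal_fiberSum H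
          (fun g => mul_nonneg (hu g) (Real.rpow_nonneg (hν _) _)) hs]
        simp_rw [fiberSum_mul_rpow_sub_one H hu hr.ne',
          ENNReal.ofReal_rpow_of_nonneg (hν _) hr.le]

theorem tsum_rpow_two_le_of_l2_estimate {w : G → ℝ} {β M₁ q : ℝ} (hw : ∀ g, 0 < w g)
    (hE1 : ∀ f : G → ℂ, (Function.support f).Finite →
      ∀ ξ : G ⧸ H → ℂ, lqNorm 2 ξ ≠ ⊤ →
        lqNorm 2 (lam H f ξ) ≤
          ENNReal.ofReal M₁ * lqNorm 2 (fiberSum H (fun g => ‖f g‖ * w g ^ β)) * lqNorm 2 ξ)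
    {u : G → ℝ} (hu : ∀ g, 0 ≤ u g) (hu_fin : (Function.support u).Finite) (hq : 0 < q)
    {ξ : G ⧸ H → ℂ} (hξ : lqNorm q ξ ≠ ⊤) :
    ∑' x, (∑' g, ENNReal.ofReal (u g * w g ^ (-β) * fiberSum H u g ^ (q / 2 - 1)) *
        ENNReal.ofReal ‖ξ (g⁻¹ • x)‖ ^ (q / 2)) ^ (2 : ℝ) ≤
      ENNReal.ofReal M₁ ^ (2 : ℝ) * (∑' x, ENNReal.ofReal (fiberSum H u x) ^ q) *
        ∑' x, ENNReal.ofReal ‖ξ x‖ ^ q := by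
  set c : G → ℝ := fun g => u g * w g ^ (-β) * fiberSum H u g ^ (q / 2 - 1)
  set η : G ⧸ H → ℝ := fun y => ‖ξ y‖ ^ (q / 2)
  have hν := fiberSum_nonneg H hu
  have hc : ∀ g, 0 ≤ c g := fun g =>
    mul_nonneg (mul_nonneg (hu g) (Real.rpow_nonneg (hw g).le _)) (Real.rpow_nonneg (hν _) _)
  have hc_fin : (Function.support c).Finite := hu_fin.subset fun g hg => by
    simp_all [c]
  have hη : lqNorm 2 (fun y => (η y : ℂ)) = lqNorm q ξ ^ (q / 2) := by
    simp only [lqNorm, η, Complex.norm_real,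
      Real.norm_of_nonneg (Real.rpow_nonneg (norm_nonneg _) _),
      ENNReal.ofReal_rpow_div_two_rpow_two (norm_nonneg _) hq.le, ← ENNReal.rpow_mul]
    congr 1
    field_simp
  have hfib : fiberSum H (fun g => ‖(c g : ℂ)‖ * w g ^ β) = fun x => fiberSum H u x ^ (q / 2) := by
    funext x
    rw [← fiberSum_mul_rpow_sub_one H hu (by positivity) x]
    congr 1
    funext g
    rw [Complex.norm_real, Real.norm_of_nonneg (hc g)]
    have := Real.rpow_pos_of_pos (hw g) β
    simp only [c, Real.rpow_neg (hw g).le]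
    field_simp
  have hc_fin' : (Function.support fun g => (c g : ℂ)).Finite := by
    simpa only [Function.support, ne_eq, Complex.ofReal_eq_zero] using hc_fin
  have key := tsum_rpow_le_of_lqNorm_le_s3 two_pos (hE1 _ hc_fin' _
    (hη ▸ ENNReal.rpow_ne_top_of_nonneg (by positivity) hξ))
  rw [hfib] at key
  simp only [ofReal_norm_lam_ofReal H hc hc_fin (fun y => Real.rpow_nonneg (norm_nonneg _) _),
    η, Complex.norm_real, Real.norm_of_nonneg (Real.rpow_nonneg (norm_nonneg _) _),
    Real.norm_of_nonneg (Real.rpow_nonneg (hν _) _),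
    ENNReal.ofReal_rpow_div_two_rpow_two (hν _) hq.le,
    ENNReal.ofReal_rpow_div_two_rpow_two (norm_nonneg _) hq.le] at key
  simp only [ENNReal.ofReal_rpow_of_nonneg (norm_nonneg _) (by positivity : 0 ≤ q / 2)]
  exact key

end PaperRD

open PaperRD

theorem statement3_general {G : Type*} [Group G] (H : Subgroup G)
    (θ q : ℝ) (hθ0 : 0 < θ) (hθ1 : θ < 1) (hq : 1 / q = 1 - θ / 2)
    (w : G → ℝ) (hw : ∀ g, 0 < w g) (β₀ β₁ : ℝ)
    (M₀ M₁ : ℝ) (hM₀ : ∀ g, w g ^ (-β₀) ≤ M₀)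
    (hE1 : ∀ f : G → ℂ, (Function.support f).Finite →
      ∀ ξ : G ⧸ H → ℂ, PaperRD.lqNorm 2 ξ ≠ ⊤ →
        PaperRD.lqNorm 2 (PaperRD.lam H f ξ) ≤
          ENNReal.ofReal M₁ *
            PaperRD.lqNorm 2 (PaperRD.fiberSum H (fun g => ‖f g‖ * w g ^ β₁)) *
            PaperRD.lqNorm 2 ξ) :
    ∀ f : G → ℂ, (Function.support f).Finite →
      ∀ ξ : G ⧸ H → ℂ, PaperRD.lqNorm q ξ ≠ ⊤ →
        PaperRD.lqNorm q (PaperRD.lam H f ξ) ≤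
          ENNReal.ofReal M₀ ^ (1 - θ) * ENNReal.ofReal M₁ ^ θ *
            PaperRD.lqNorm q
              (PaperRD.fiberSum H (fun g => ‖f g‖ * w g ^ ((1 - θ) * β₀ + θ * β₁))) *
            PaperRD.lqNorm q ξ := by
  intro f hf ξ hξ
  have hq0 : 0 < q := one_div_pos.mp (by rw [hq]; linarith)
  have hqθ : (1 - θ) * q + θ * q / 2 = 1 := by
    have h := mul_one_div_cancel hq0.ne'
    rw [hq] at h
    linear_combination h
  set u : G → ℝ := fun g => ‖f g‖ * w g ^ ((1 - θ) * β₀ + θ * β₁)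
  have hu : ∀ g, 0 ≤ u g := fun g => mul_nonneg (norm_nonneg _) (Real.rpow_nonneg (hw g).le _)
  have hu_fin : (Function.support u).Finite := hf.subset fun g hg => by simp_all [u]
  have hsplit := fun g y => ofReal_mul_ofReal_le_split (norm_nonneg (f g)) (norm_nonneg (ξ y))
    (hw g) (le_fiberSum H hu (summable_of_hasFiniteSupport hu_fin) g) hθ0.le hθ1.le two_pos.le
    hq0.le hqθ
  calc lqNorm q (lam H f ξ)
      ≤ (∑' x, (∑' g, ENNReal.ofReal ‖f g‖ * ENNReal.ofReal ‖ξ (g⁻¹ • x)‖) ^ q) ^ (1 / q) :=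
        lqNorm_lam_le_s3 H hf ξ hq0.le
    _ ≤ ENNReal.ofReal M₀ ^ (1 - θ) * ENNReal.ofReal M₁ ^ θ *
          (∑' x, ENNReal.ofReal (fiberSum H u x) ^ q) ^ (1 / q) *
          (∑' x, ENNReal.ofReal ‖ξ x‖ ^ q) ^ (1 / q) :=
        ENNReal.tsum_rpow_le_of_split hθ0.le hθ1.le two_pos hq0 hqθ hsplit
          (tsum_ofReal_mul_fiberSum_rpow_le H hu hu_fin hM₀
            ((Real.rpow_nonneg (hw 1).le _).trans (hM₀ 1)) hq0)
          (tsum_rpow_two_le_of_l2_estimate H hw hE1 hu hu_fin hq0 hξ)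
    _ = _ := by
        simp only [lqNorm, Real.norm_of_nonneg (fiberSum_nonneg H hu _)]

/-- Weighted interpolation estimate for the quasi-regular
representation. Let `0 < θ < 1` and `1/q = 1 - θ/2`. Let `w : G → (0,∞)`,
`β₀ β₁ ∈ ℝ`, `β_θ = (1-θ)β₀ + θβ₁`. Assume `(E₀)`: `w^{-β₀}` is bounded by `M₀`, and
`(E₁)`: the `ℓ²` endpoint estimate with constant `M₁ > 0`. Then for every finitely
supported `f` and `ξ ∈ ℓ^q(X)`,
`‖λ_X(f)ξ‖_q ≤ M₀^{1-θ} M₁^θ ‖π_#(|f| w^{β_θ})‖_q ‖ξ‖_q`. -/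
theorem statement3 {G : Type*} [Group G] [Countable G] (H : Subgroup G)
    (θ q : ℝ) (hθ0 : 0 < θ) (hθ1 : θ < 1) (hq : 1 / q = 1 - θ / 2)
    (w : G → ℝ) (hw : ∀ g, 0 < w g) (β₀ β₁ : ℝ)
    (M₀ M₁ : ℝ) (hM₀ : ∀ g, w g ^ (-β₀) ≤ M₀) (hM₁ : 0 < M₁)
    (hE1 : ∀ f : G → ℂ, (Function.support f).Finite →
      ∀ ξ : G ⧸ H → ℂ, PaperRD.lqNorm 2 ξ ≠ ⊤ →
        PaperRD.lqNorm 2 (PaperRD.lam H f ξ) ≤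
          ENNReal.ofReal M₁ *
            PaperRD.lqNorm 2 (PaperRD.fiberSum H (fun g => ‖f g‖ * w g ^ β₁)) *
            PaperRD.lqNorm 2 ξ) :
    ∀ f : G → ℂ, (Function.support f).Finite →
      ∀ ξ : G ⧸ H → ℂ, PaperRD.lqNorm q ξ ≠ ⊤ →
        PaperRD.lqNorm q (PaperRD.lam H f ξ) ≤
          ENNReal.ofReal M₀ ^ (1 - θ) * ENNReal.ofReal M₁ ^ θ *
            PaperRD.lqNorm q
              (PaperRD.fiberSum H (fun g => ‖f g‖ * w g ^ ((1 - θ) * β₀ + θ * β₁))) *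
            PaperRD.lqNorm q ξ :=
  statement3_general H θ q hθ0 hθ1 hq w hw β₀ β₁ M₀ M₁ hM₀ hE1
end
end

section
/- Let G be a countable discrete group generated by a finite symmetric set with word length ℓ, and let H < G be a proper subgroup such that the pair (G,H) has pair rapid decay with constants C_h, s₁. Suppose there exists t ∈ G \ H such that M := |H ∩ t⁻¹Ht| is finite. Then H has polynomial growth with respect to the induced length ℓ|_H; more precisely, |H ∩ B_G(R)| ≤ C_h²·M·(1+R+2ℓ(t))^{2s₁} for all R ≥ 0. In particular, if H is almost malnormal in G (H ∩ t⁻¹Ht is finite for every t ∈ G \ H) and (G,H) has pair rapid decay, then H has polynomial growth with respect to ℓ|_H. -/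
open scoped ENNReal
open Filter Topology

noncomputable section

namespace PaperRD
namespace Aux

open Finset
open scoped Classical

variable {G : Type*} [Group G]


theorem exists_rep (S : Finset G) (hSsym : ∀ s ∈ S, s⁻¹ ∈ S)
    (hSgen : Subgroup.closure (S : Set G) = ⊤) (g : G) :
    ∃ l : List G, (∀ s ∈ l, s ∈ S) ∧ l.prod = g := by
  have hg : g ∈ (Subgroup.closure (S : Set G)).toSubmonoid := by
    rw [hSgen]; trivial
  rw [Subgroup.closure_toSubmonoid] at hg
  obtain ⟨l, hl, hprod⟩ := Submonoid.exists_list_of_mem_closure hg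
  refine ⟨l, fun s hs => ?_, hprod⟩
  rcases hl s hs with h | h
  · exact h
  · have h' : s⁻¹ ∈ S := by simpa [Set.mem_inv] using h
    simpa using hSsym _ h'

theorem wl_le (S : Finset G) (l : List G) (hl : ∀ s ∈ l, s ∈ S) :
    wordLength (S : Set G) l.prod ≤ l.length :=
  Nat.sInf_le ⟨l, by simpa using hl, rfl, rfl⟩

theorem wl_exists (S : Finset G) (hSsym : ∀ s ∈ S, s⁻¹ ∈ S)
    (hSgen : Subgroup.closure (S : Set G) = ⊤) (g : G) :
    ∃ l : List G, (∀ s ∈ l, s ∈ S) ∧ l.length = wordLength (S : Set G) g ∧ l.prod = g := by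
  obtain ⟨l, hl, hprod⟩ := exists_rep S hSsym hSgen g
  have hne : {n : ℕ | ∃ l : List G, (∀ s ∈ l, s ∈ (S : Set G)) ∧ l.length = n ∧ l.prod = g}.Nonempty :=
    ⟨l.length, l, by simpa using hl, rfl, hprod⟩
  obtain ⟨l', h1, h2, h3⟩ := Nat.sInf_mem hne
  exact ⟨l', by simpa using h1, h2, h3⟩

theorem wl_one (S : Finset G) : wordLength (S : Set G) (1 : G) = 0 :=
  Nat.sInf_eq_zero.mpr (Or.inl ⟨[], by simp⟩)

theorem wl_mul_le (S : Finset G) (hSsym : ∀ s ∈ S, s⁻¹ ∈ S)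
    (hSgen : Subgroup.closure (S : Set G) = ⊤) (a b : G) :
    wordLength (S : Set G) (a * b) ≤ wordLength (S : Set G) a + wordLength (S : Set G) b := by
  obtain ⟨la, ha1, ha2, ha3⟩ := wl_exists S hSsym hSgen a
  obtain ⟨lb, hb1, hb2, hb3⟩ := wl_exists S hSsym hSgen b
  have h := wl_le S (la ++ lb) (by
    intro s hs
    rcases List.mem_append.mp hs with h | h
    · exact ha1 s h
    · exact hb1 s h)
  rw [List.prod_append, List.length_append, ha3, hb3, ha2, hb2] at h
  exact h

theorem wl_inv_le (S : Finset G) (hSsym : ∀ s ∈ S, s⁻¹ ∈ S)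
    (hSgen : Subgroup.closure (S : Set G) = ⊤) (g : G) :
    wordLength (S : Set G) g⁻¹ ≤ wordLength (S : Set G) g := by
  obtain ⟨l, h1, h2, h3⟩ := wl_exists S hSsym hSgen g
  have := wl_le S ((l.map fun x => x⁻¹).reverse) (by
    intro s hs
    rw [List.mem_reverse, List.mem_map] at hs
    obtain ⟨a, ha, rfl⟩ := hs
    exact hSsym a (h1 a ha))
  rw [← List.prod_inv_reverse, h3] at this
  simpa [h2] using this

theorem ball_finite (S : Finset G) (hSsym : ∀ s ∈ S, s⁻¹ ∈ S)
    (hSgen : Subgroup.closure (S : Set G) = ⊤) (R : ℕ) :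
    {g : G | wordLength (S : Set G) g ≤ R}.Finite := by
  have key : ∀ R : ℕ,
      {g : G | ∃ l : List G, (∀ s ∈ l, s ∈ S) ∧ l.length ≤ R ∧ l.prod = g}.Finite := by
    intro R
    induction R with
    | zero =>
      apply Set.Finite.subset (Set.finite_singleton (1 : G))
      rintro g ⟨l, -, hlen, hprod⟩
      interval_cases hl : l.length
      · simp [List.length_eq_zero_iff.mp hl] at hprod
        simp [← hprod]
      all_goals omega
    | succ n ih =>
      apply Set.Finite.subset (ih.union (Set.Finite.biUnion S.finite_toSet
        (fun s _ => ih.image (fun g => s * g))))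
      rintro g ⟨l, hmem, hlen, hprod⟩
      match l with
      | [] => exact Or.inl ⟨[], by simp, by simp, by simpa using hprod⟩
      | s :: l' =>
        right
        refine Set.mem_biUnion (hmem s (by simp)) ?_
        refine ⟨l'.prod, ⟨l', fun x hx => hmem x (by simp [hx]), ?_, rfl⟩, ?_⟩
        · simpa using Nat.succ_le_succ_iff.mp (by simpa using hlen)
        · simpa using hprod
  apply (key R).subset
  intro g hg
  simp only [Set.mem_setOf_eq] at hg
  obtain ⟨l, h1, h2, h3⟩ := wl_exists S hSsym hSgen g
  exact ⟨l, h1, by omega, h3⟩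



open Finset
open scoped Classical

variable (H : Subgroup G)

theorem norm21_eq_sum (B : Finset G) (f : G → ℂ) (hf : ∀ g ∉ B, f g = 0) :
    norm21 H f = Real.sqrt
      (∑ x ∈ B.image (fun g => (QuotientGroup.mk g : G ⧸ H)),
        (∑ g ∈ B.filter (fun g => (QuotientGroup.mk g : G ⧸ H) = x), ‖f g‖) ^ 2) := by
  classical
  unfold norm21
  congr 1
  have hinner : ∀ x : G ⧸ H,
      (∑' g : {g : G // (QuotientGroup.mk g : G ⧸ H) = x}, ‖f (g : G)‖)
        = ∑ g ∈ B.filter (fun g => (QuotientGroup.mk g : G ⧸ H) = x), ‖f g‖ := by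
    intro x
    have h1 : (∑' g : {g : G // (QuotientGroup.mk g : G ⧸ H) = x}, ‖f (g : G)‖)
        = ∑' g : G, ({g : G | (QuotientGroup.mk g : G ⧸ H) = x}).indicator
            (fun g => ‖f g‖) g :=
      tsum_subtype {g : G | (QuotientGroup.mk g : G ⧸ H) = x} (fun g => ‖f g‖)
    rw [h1, tsum_eq_sum (s := B.filter (fun g => (QuotientGroup.mk g : G ⧸ H) = x)) ?_]
    · apply Finset.sum_congr rfl
      intro g hg
      rw [Finset.mem_filter] at hg
      exact Set.indicator_of_mem (show g ∈ {g : G | (QuotientGroup.mk g : G ⧸ H) = x} from hg.2) _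
    · intro g hg
      by_cases hx : (QuotientGroup.mk g : G ⧸ H) = x
      · rw [Set.indicator_of_mem (show g ∈ {g : G | (QuotientGroup.mk g : G ⧸ H) = x} from hx)]
        have : g ∉ B := fun hB => hg (Finset.mem_filter.mpr ⟨hB, hx⟩)
        simp [hf g this]
      · exact Set.indicator_of_notMem (show g ∉ {g : G | (QuotientGroup.mk g : G ⧸ H) = x} from hx) _
  have h2 : (∑' x : G ⧸ H,
      (∑' g : {g : G // (QuotientGroup.mk g : G ⧸ H) = x}, ‖f (g : G)‖) ^ 2)
      = ∑' x : G ⧸ H,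
        (∑ g ∈ B.filter (fun g => (QuotientGroup.mk g : G ⧸ H) = x), ‖f g‖) ^ 2 :=
    tsum_congr fun x => by rw [hinner]
  rw [h2, tsum_eq_sum (s := B.image (fun g => (QuotientGroup.mk g : G ⧸ H)))]
  intro x hx
  have : B.filter (fun g => (QuotientGroup.mk g : G ⧸ H) = x) = ∅ := by
    rw [Finset.filter_eq_empty_iff]
    intro g hg hgx
    exact hx (Finset.mem_image.mpr ⟨g, hg, hgx⟩)
  rw [this]
  simp

theorem convC_delta (f : G → ℂ) (t : G) :
    convC f (fun g => (((if g = t then (1 : ℝ) else 0) : ℝ) : ℂ)) = fun g => f (g * t⁻¹) := by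
  funext g
  unfold convC
  rw [tsum_eq_single (g * t⁻¹)]
  · simp
  · intro y hy
    have : ¬ (y⁻¹ * g = t) := by
      intro h
      apply hy
      rw [← h]
      group
    simp [this]


end Aux
end PaperRD

open PaperRD Finset in
open scoped Classical in
set_option maxHeartbeats 2000000 in
/-- Suppose `G` is generated by a finite symmetric set `S` with word
length `ℓ`, `H < G` is a proper subgroup, and `(G,H)` has pair rapid decay with
constants `C_h, s₁`. If there is `t ∈ G \ H` with `M := |H ∩ t⁻¹Ht| < ∞`, then
`|H ∩ B_G(R)| ≤ C_h² · M · (1+R+2ℓ(t))^{2s₁}` for all `R ≥ 0`; in particular, if `H`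
is almost malnormal in `G`, then `H` has polynomial growth with respect to `ℓ|_H`. -/
theorem statement10 {G : Type*} [Group G] [Countable G] (H : Subgroup G)
    (hproper : H ≠ ⊤)
    (S : Finset G) (hSsym : ∀ s ∈ S, s⁻¹ ∈ S)
    (hSgen : Subgroup.closure (S : Set G) = ⊤)
    (ℓ : G → ℕ) (hℓ : ℓ = PaperRD.wordLength (S : Set G))
    (C s₁ : ℝ) (hC : 0 < C) (hs₁ : 0 < s₁)
    (hRD : ∀ f : G → ℂ, (Function.support f).Finite →
      PaperRD.hNorm H f ≤
        C * PaperRD.norm21 H (fun g => f g * (((1 + (ℓ g : ℝ)) ^ s₁ : ℝ) : ℂ)))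
    (t : G) (ht : t ∉ H)
    (hfin : {g : G | g ∈ H ∧ t * g * t⁻¹ ∈ H}.Finite) :
    (∀ R : ℕ,
      ({g : G | g ∈ H ∧ ℓ g ≤ R}.ncard : ℝ) ≤
        C ^ 2 * ({g : G | g ∈ H ∧ t * g * t⁻¹ ∈ H}.ncard : ℝ) *
          (1 + (R : ℝ) + 2 * (ℓ t : ℝ)) ^ (2 * s₁)) ∧
    ((∀ u : G, u ∉ H → {g : G | g ∈ H ∧ u * g * u⁻¹ ∈ H}.Finite) →
      ∃ C' D' : ℝ, 0 < C' ∧ 0 < D' ∧ ∀ R : ℕ,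
        ({g : G | g ∈ H ∧ ℓ g ≤ R}.ncard : ℝ) ≤ C' * (1 + (R : ℝ)) ^ D') := by
  classical
  subst hℓ
  set ℓ : G → ℕ := PaperRD.wordLength (S : Set G) with hℓdef
  set D : Finset G := hfin.toFinset with hD
  have hMD : ({g : G | g ∈ H ∧ t * g * t⁻¹ ∈ H}.ncard : ℝ) = (D.card : ℝ) := by
    rw [Set.ncard_eq_toFinset_card _ hfin, hD]
  have hDpos : 0 < (D.card : ℝ) := by
    have h1 : (1 : G) ∈ D := by
      rw [hD, Set.Finite.mem_toFinset]
      exact ⟨H.one_mem, by simpa using H.one_mem⟩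
    exact_mod_cast Finset.card_pos.mpr ⟨1, h1⟩
  set L : ℝ := (ℓ t : ℝ) with hL
  have hL0 : 0 ≤ L := Nat.cast_nonneg _
  have main : ∀ R : ℕ,
      ({g : G | g ∈ H ∧ ℓ g ≤ R}.ncard : ℝ) ≤
        C ^ 2 * (D.card : ℝ) * (1 + (R : ℝ) + L) ^ (2 * s₁) := by
    intro R
    have hAfin : {g : G | g ∈ H ∧ ℓ g ≤ R}.Finite :=
      (Aux.ball_finite S hSsym hSgen R).subset (fun g hg => hg.2)
    set A : Finset G := hAfin.toFinset with hA
    have hmemA : ∀ g : G, g ∈ A ↔ g ∈ H ∧ ℓ g ≤ R := by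
      intro g; rw [hA, Set.Finite.mem_toFinset]; rfl
    have hAn : ({g : G | g ∈ H ∧ ℓ g ≤ R}.ncard : ℝ) = (A.card : ℝ) := by
      rw [Set.ncard_eq_toFinset_card _ hAfin, hA]
    set a : ℝ := (A.card : ℝ) with ha
    have h1A : (1 : G) ∈ A := (hmemA 1).mpr ⟨H.one_mem, by simp [hℓdef, Aux.wl_one]⟩
    have ha_pos : 0 < a := by
      rw [ha]
      exact_mod_cast Finset.card_pos.mpr ⟨1, h1A⟩
    set B : Finset G := A.image (fun g => g * t⁻¹) with hB
    have hmemB : ∀ g : G, g ∈ B ↔ g * t ∈ A := by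
      intro g
      rw [hB, Finset.mem_image]
      constructor
      · rintro ⟨b, hb, rfl⟩; simpa using hb
      · intro h; exact ⟨g * t, h, by group⟩
    have hcardB : (B.card : ℝ) = a := by
      rw [hB, Finset.card_image_of_injective _ (fun x y h => by
        exact mul_right_cancel h)]
    set f : G → ℂ := fun g => if g ∈ B then 1 else 0 with hf
    have hfsupp : (Function.support f).Finite := by
      apply Set.Finite.subset B.finite_toSet
      intro g hg
      rw [Function.mem_support] at hg
      by_contra h
      rw [Finset.mem_coe] at h
      exact hg (by simp [hf, h])
    set W : ℝ := (1 + (R : ℝ) + L) ^ s₁ with hW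
    have hbase_pos : (0:ℝ) < 1 + (R : ℝ) + L := by positivity
    have hW0 : 0 ≤ W := Real.rpow_nonneg hbase_pos.le _
    -- weight bound on B
    have hwB : ∀ g ∈ B, (1 + (ℓ g : ℝ)) ^ s₁ ≤ W := by
      intro g hg
      have h1 : ℓ g ≤ R + ℓ t := by
        have h2 : g = (g * t) * t⁻¹ := by group
        calc ℓ g = ℓ ((g * t) * t⁻¹) := by rw [← h2]
          _ ≤ ℓ (g * t) + ℓ t⁻¹ := Aux.wl_mul_le S hSsym hSgen _ _
          _ ≤ R + ℓ t := add_le_add ((hmemA _).mp ((hmemB g).mp hg)).2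
              (Aux.wl_inv_le S hSsym hSgen t)
      apply Real.rpow_le_rpow (by positivity) _ hs₁.le
      rw [hL]
      have : (ℓ g : ℝ) ≤ (R : ℝ) + (ℓ t : ℝ) := by exact_mod_cast h1
      linarith
    -- fiber bound
    have hfiber : ∀ x ∈ B.image (fun g => (QuotientGroup.mk g : G ⧸ H)),
        ((B.filter (fun g => (QuotientGroup.mk g : G ⧸ H) = x)).card : ℝ) ≤ (D.card : ℝ) := by
      intro x hx
      obtain ⟨b₀, hb₀B, hb₀x⟩ := Finset.mem_image.mp hx
      have hcard : (B.filter (fun g => (QuotientGroup.mk g : G ⧸ H) = x)).card ≤ D.card := by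
        apply Finset.card_le_card_of_injOn (fun g => (b₀ * t)⁻¹ * (g * t))
        · intro g hg
          obtain ⟨hg1, hg2⟩ := Finset.mem_filter.mp hg
          have hgt : g * t ∈ A := (hmemB g).mp hg1
          have hb₀t : b₀ * t ∈ A := (hmemB b₀).mp hb₀B
          have h1 : (b₀ * t)⁻¹ * (g * t) ∈ H :=
            H.mul_mem (H.inv_mem ((hmemA _).mp hb₀t).1) ((hmemA _).mp hgt).1
          have h3 : b₀⁻¹ * g ∈ H := QuotientGroup.eq.mp (hb₀x.trans hg2.symm)
          have hmemD : ∀ u : G, u ∈ H ∧ t * u * t⁻¹ ∈ H → u ∈ D := by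
            intro u hu
            rw [hD, Set.Finite.mem_toFinset]
            exact hu
          apply hmemD
          refine ⟨h1, ?_⟩
          have h2 : t * ((b₀ * t)⁻¹ * (g * t)) * t⁻¹ = b₀⁻¹ * g := by group
          rw [h2]; exact h3
        · intro g hg g' hg' hE
          have := mul_left_cancel hE
          exact mul_right_cancel this
      exact_mod_cast hcard
    -- upper bound for norm21 of weighted f
    have hup : PaperRD.norm21 H (fun g => f g * (((1 + (ℓ g : ℝ)) ^ s₁ : ℝ) : ℂ))
        ≤ Real.sqrt (W ^ 2 * (D.card : ℝ) * a) := by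
      rw [Aux.norm21_eq_sum H B _ (by intro g hg; simp [hf, hg])]
      apply Real.sqrt_le_sqrt
      have step1 : ∀ x ∈ B.image (fun g => (QuotientGroup.mk g : G ⧸ H)),
          (∑ g ∈ B.filter (fun g => (QuotientGroup.mk g : G ⧸ H) = x),
            ‖f g * (((1 + (ℓ g : ℝ)) ^ s₁ : ℝ) : ℂ)‖) ^ 2
          ≤ W ^ 2 * (D.card : ℝ) *
            ((B.filter (fun g => (QuotientGroup.mk g : G ⧸ H) = x)).card : ℝ) := by
        intro x hx
        set c : ℝ := ((B.filter (fun g => (QuotientGroup.mk g : G ⧸ H) = x)).card : ℝ) with hc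
        have hc0 : 0 ≤ c := Nat.cast_nonneg _
        have hsum : (∑ g ∈ B.filter (fun g => (QuotientGroup.mk g : G ⧸ H) = x),
            ‖f g * (((1 + (ℓ g : ℝ)) ^ s₁ : ℝ) : ℂ)‖) ≤ c * W := by
          calc (∑ g ∈ B.filter (fun g => (QuotientGroup.mk g : G ⧸ H) = x),
              ‖f g * (((1 + (ℓ g : ℝ)) ^ s₁ : ℝ) : ℂ)‖)
              ≤ ∑ _g ∈ B.filter (fun g => (QuotientGroup.mk g : G ⧸ H) = x), W := by
                apply Finset.sum_le_sum
                intro g hg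
                rw [Finset.mem_filter] at hg
                have : f g = 1 := by simp [hf, hg.1]
                rw [this, one_mul, Complex.norm_real, Real.norm_eq_abs,
                  abs_of_nonneg (Real.rpow_nonneg (by positivity) _)]
                exact hwB g hg.1
            _ = c * W := by rw [Finset.sum_const, nsmul_eq_mul]
        calc (∑ g ∈ B.filter (fun g => (QuotientGroup.mk g : G ⧸ H) = x),
            ‖f g * (((1 + (ℓ g : ℝ)) ^ s₁ : ℝ) : ℂ)‖) ^ 2
            ≤ (c * W) ^ 2 := by
              apply pow_le_pow_left₀ (Finset.sum_nonneg fun g _ => norm_nonneg _) hsum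
          _ = c * c * W ^ 2 := by ring
          _ ≤ (D.card : ℝ) * c * W ^ 2 := by
              apply mul_le_mul_of_nonneg_right _ (sq_nonneg W)
              exact mul_le_mul_of_nonneg_right (hfiber x hx) hc0
          _ = W ^ 2 * (D.card : ℝ) * c := by ring
      calc (∑ x ∈ B.image (fun g => (QuotientGroup.mk g : G ⧸ H)),
          (∑ g ∈ B.filter (fun g => (QuotientGroup.mk g : G ⧸ H) = x),
            ‖f g * (((1 + (ℓ g : ℝ)) ^ s₁ : ℝ) : ℂ)‖) ^ 2)
          ≤ ∑ x ∈ B.image (fun g => (QuotientGroup.mk g : G ⧸ H)),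
            W ^ 2 * (D.card : ℝ) *
              ((B.filter (fun g => (QuotientGroup.mk g : G ⧸ H) = x)).card : ℝ) :=
            Finset.sum_le_sum step1
        _ = W ^ 2 * (D.card : ℝ) * (B.card : ℝ) := by
            rw [← Finset.mul_sum]
            congr 1
            rw [Finset.card_eq_sum_card_image (fun g => (QuotientGroup.mk g : G ⧸ H)) B]
            push_cast
            rfl
        _ = W ^ 2 * (D.card : ℝ) * a := by rw [hcardB]
    -- lower bound : a ≤ hNorm H f
    have hlow : a ≤ PaperRD.hNorm H f := by
      have hBdd : ∀ r ∈ {r : ℝ | ∃ φ : G → ℝ, (Function.support φ).Finite ∧ (∀ y, 0 ≤ φ y) ∧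
          PaperRD.norm21 H (fun g => (φ g : ℂ)) ≤ 1 ∧
          r = PaperRD.norm21 H (PaperRD.convC f (fun g => (φ g : ℂ)))}, r ≤ a := by
        rintro r ⟨φ, hφfin, hφ0, hφn, rfl⟩
        set P : Finset G := hφfin.toFinset with hP
        have hmemP : ∀ g : G, g ∈ P ↔ φ g ≠ 0 := by
          intro g; rw [hP, Set.Finite.mem_toFinset]; rfl
        set F : Finset G := B.biUnion (fun b => P.image (fun h => b * h)) with hFdef
        have hconv : ∀ g : G, PaperRD.convC f (fun g => (φ g : ℂ)) g
            = ((∑ b ∈ B, φ (b⁻¹ * g) : ℝ) : ℂ) := by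
          intro g
          show (∑' y : G, f y * (φ (y⁻¹ * g) : ℂ)) = _
          rw [tsum_eq_sum (s := B) (by intro y hy; simp [hf, hy])]
          push_cast
          apply Finset.sum_congr rfl
          intro y hy
          simp [hf, hy]
        have hvan : ∀ g ∉ F, PaperRD.convC f (fun g => (φ g : ℂ)) g = 0 := by
          intro g hg
          rw [hconv]
          norm_cast
          apply Finset.sum_eq_zero
          intro b hb
          by_contra h
          apply hg
          rw [hFdef, Finset.mem_biUnion]
          exact ⟨b, hb, Finset.mem_image.mpr ⟨b⁻¹ * g, (hmemP _).mpr h, by group⟩⟩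
        rw [Aux.norm21_eq_sum H F _ hvan]
        set Φ : G ⧸ H → ℝ := fun y => ∑ h ∈ P.filter (fun h => (QuotientGroup.mk h : G ⧸ H) = y), φ h with hΦ
        have hΦ0 : ∀ y, 0 ≤ Φ y := fun y => Finset.sum_nonneg fun h _ => hφ0 h
        have hΦle : ∀ Y : Finset (G ⧸ H), ∑ y ∈ Y, Φ y ^ 2 ≤ 1 := by
          have base : ∑ y ∈ P.image (fun g => (QuotientGroup.mk g : G ⧸ H)), Φ y ^ 2 ≤ 1 := by
            have hn := hφn
            rw [Aux.norm21_eq_sum H P _ (by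
              intro g hg
              have : φ g = 0 := by
                by_contra h; exact hg ((hmemP g).mpr h)
              simp [this])] at hn
            have heq : ∀ y, (∑ g ∈ P.filter (fun g => (QuotientGroup.mk g : G ⧸ H) = y),
                ‖((φ g : ℝ) : ℂ)‖) = Φ y := by
              intro y
              apply Finset.sum_congr rfl
              intro g _
              rw [Complex.norm_real, Real.norm_eq_abs, abs_of_nonneg (hφ0 g)]
            simp only [heq] at hn
            have hnn : (0:ℝ) ≤ ∑ y ∈ P.image (fun g => (QuotientGroup.mk g : G ⧸ H)), Φ y ^ 2 :=
              Finset.sum_nonneg fun y _ => sq_nonneg _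
            nlinarith [Real.sq_sqrt hnn, Real.sqrt_nonneg (∑ y ∈ P.image (fun g => (QuotientGroup.mk g : G ⧸ H)), Φ y ^ 2)]
          intro Y
          calc ∑ y ∈ Y, Φ y ^ 2
              = ∑ y ∈ Y ∩ P.image (fun g => (QuotientGroup.mk g : G ⧸ H)), Φ y ^ 2 := by
                symm
                apply Finset.sum_subset Finset.inter_subset_left
                intro y hy hy'
                have hΦy : Φ y = 0 := by
                  rw [hΦ]
                  apply Finset.sum_eq_zero
                  intro h hh
                  rw [Finset.mem_filter] at hh
                  exfalso
                  exact hy' (Finset.mem_inter.mpr ⟨hy, Finset.mem_image.mpr ⟨h, hh.1, hh.2⟩⟩)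
                simp [hΦy]
            _ ≤ ∑ y ∈ P.image (fun g => (QuotientGroup.mk g : G ⧸ H)), Φ y ^ 2 :=
                Finset.sum_le_sum_of_subset_of_nonneg Finset.inter_subset_right
                  (fun y _ _ => sq_nonneg _)
            _ ≤ 1 := base
        have hinner : ∀ x : G ⧸ H,
            (∑ g ∈ F.filter (fun g => (QuotientGroup.mk g : G ⧸ H) = x),
              ‖PaperRD.convC f (fun g => (φ g : ℂ)) g‖)
            ≤ ∑ b ∈ B, Φ ((b⁻¹ : G) • x) := by
          intro x
          have hterm : ∀ g ∈ F.filter (fun g => (QuotientGroup.mk g : G ⧸ H) = x),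
              ‖PaperRD.convC f (fun g => (φ g : ℂ)) g‖ = ∑ b ∈ B, φ (b⁻¹ * g) := by
            intro g _
            rw [hconv g, Complex.norm_real, Real.norm_eq_abs,
              abs_of_nonneg (Finset.sum_nonneg fun b _ => hφ0 _)]
          rw [Finset.sum_congr rfl hterm, Finset.sum_comm]
          apply Finset.sum_le_sum
          intro b _
          have himg : (∑ g ∈ F.filter (fun g => (QuotientGroup.mk g : G ⧸ H) = x), φ (b⁻¹ * g))
              = ∑ h ∈ (F.filter (fun g => (QuotientGroup.mk g : G ⧸ H) = x)).image
                  (fun g => b⁻¹ * g), φ h := by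
            rw [Finset.sum_image (fun u _ v _ h => mul_left_cancel h)]
          rw [himg, hΦ]
          rw [← Finset.sum_filter_ne_zero]
          apply Finset.sum_le_sum_of_subset_of_nonneg _ (fun h _ _ => hφ0 h)
          intro h hh
          rw [Finset.mem_filter] at hh
          obtain ⟨hh1, hh2⟩ := hh
          obtain ⟨g, hg, rfl⟩ := Finset.mem_image.mp hh1
          rw [Finset.mem_filter] at hg ⊢
          refine ⟨(hmemP _).mpr hh2, ?_⟩
          have : (QuotientGroup.mk (b⁻¹ * g) : G ⧸ H) = (b⁻¹ : G) • (QuotientGroup.mk g : G ⧸ H) := rfl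
          rw [this, hg.2]
        -- outer estimate
        have houter : (∑ x ∈ F.image (fun g => (QuotientGroup.mk g : G ⧸ H)),
            (∑ g ∈ F.filter (fun g => (QuotientGroup.mk g : G ⧸ H) = x),
              ‖PaperRD.convC f (fun g => (φ g : ℂ)) g‖) ^ 2) ≤ a ^ 2 := by
          calc (∑ x ∈ F.image (fun g => (QuotientGroup.mk g : G ⧸ H)),
              (∑ g ∈ F.filter (fun g => (QuotientGroup.mk g : G ⧸ H) = x),
                ‖PaperRD.convC f (fun g => (φ g : ℂ)) g‖) ^ 2)
              ≤ ∑ x ∈ F.image (fun g => (QuotientGroup.mk g : G ⧸ H)),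
                (∑ b ∈ B, Φ ((b⁻¹ : G) • x)) ^ 2 := by
                apply Finset.sum_le_sum
                intro x _
                apply pow_le_pow_left₀ (Finset.sum_nonneg fun g _ => norm_nonneg _) (hinner x)
            _ ≤ ∑ x ∈ F.image (fun g => (QuotientGroup.mk g : G ⧸ H)),
                (B.card : ℝ) * ∑ b ∈ B, Φ ((b⁻¹ : G) • x) ^ 2 := by
                apply Finset.sum_le_sum
                intro x _
                exact sq_sum_le_card_mul_sum_sq
            _ = (B.card : ℝ) * ∑ b ∈ B, ∑ x ∈ F.image (fun g => (QuotientGroup.mk g : G ⧸ H)),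
                Φ ((b⁻¹ : G) • x) ^ 2 := by
                rw [← Finset.mul_sum, Finset.sum_comm]
            _ ≤ (B.card : ℝ) * ∑ _b ∈ B, (1 : ℝ) := by
                apply mul_le_mul_of_nonneg_left _ (Nat.cast_nonneg _)
                apply Finset.sum_le_sum
                intro b _
                have : (∑ x ∈ F.image (fun g => (QuotientGroup.mk g : G ⧸ H)),
                    Φ ((b⁻¹ : G) • x) ^ 2)
                    = ∑ y ∈ (F.image (fun g => (QuotientGroup.mk g : G ⧸ H))).image
                        (fun x => (b⁻¹ : G) • x), Φ y ^ 2 := by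
                  rw [Finset.sum_image (fun u _ v _ h => smul_left_cancel _ h)]
                rw [this]
                exact hΦle _
            _ = a ^ 2 := by
                rw [Finset.sum_const, nsmul_eq_mul, mul_one, hcardB]
                ring

        calc Real.sqrt (∑ x ∈ F.image (fun g => (QuotientGroup.mk g : G ⧸ H)),
            (∑ g ∈ F.filter (fun g => (QuotientGroup.mk g : G ⧸ H) = x),
              ‖PaperRD.convC f (fun g => (φ g : ℂ)) g‖) ^ 2)
            ≤ Real.sqrt (a ^ 2) := Real.sqrt_le_sqrt houter
          _ = a := Real.sqrt_sq ha_pos.le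
      apply le_csSup ⟨a, hBdd⟩
      refine ⟨fun g => if g = t then (1 : ℝ) else 0, ?_, ?_, ?_, ?_⟩
      · apply Set.Finite.subset (Set.finite_singleton t)
        intro g hg
        rw [Function.mem_support] at hg
        by_contra h
        simp only [Set.mem_singleton_iff] at h
        exact hg (by simp [h])
      · intro y; by_cases h : y = t <;> simp [h]
      · rw [Aux.norm21_eq_sum H {t} _ (by
          intro g hg
          simp only [Finset.mem_singleton] at hg
          simp [hg])]
        rw [Finset.image_singleton, Finset.sum_singleton, Finset.filter_singleton, if_pos rfl,
          Finset.sum_singleton]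
        simp
      · rw [show (fun g => ((if g = t then (1:ℝ) else 0 : ℝ) : ℂ)) = (fun g => (((if g = t then (1 : ℝ) else 0) : ℝ) : ℂ)) from rfl]
        rw [Aux.convC_delta f t]
        have hfa : (fun g => f (g * t⁻¹)) = fun g => if g ∈ A then (1 : ℂ) else 0 := by
          funext g
          simp only [hf]
          have : g * t⁻¹ ∈ B ↔ g ∈ A := by
            rw [hmemB]
            constructor
            · intro h; simpa using h
            · intro h; simpa using h
          by_cases hg : g ∈ A
          · rw [if_pos (this.mpr hg), if_pos hg]
          · rw [if_neg (fun hc => hg (this.mp hc)), if_neg hg]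
        rw [hfa, Aux.norm21_eq_sum H A _ (by intro g hg; simp [hg])]
        have himg : A.image (fun g => (QuotientGroup.mk g : G ⧸ H))
            = {(QuotientGroup.mk (1:G) : G ⧸ H)} := by
          apply Finset.eq_singleton_iff_unique_mem.mpr
          constructor
          · exact Finset.mem_image.mpr ⟨1, h1A, rfl⟩
          · intro x hx
            obtain ⟨g, hg, rfl⟩ := Finset.mem_image.mp hx
            exact QuotientGroup.eq.mpr (by simpa using H.inv_mem ((hmemA g).mp hg).1)
        rw [himg, Finset.sum_singleton]
        have hfilt : A.filter (fun g => (QuotientGroup.mk g : G ⧸ H)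
            = (QuotientGroup.mk (1:G) : G ⧸ H)) = A := by
          apply Finset.filter_true_of_mem
          intro g hg
          exact QuotientGroup.eq.mpr (by simpa using H.inv_mem ((hmemA g).mp hg).1)
        rw [hfilt]
        have : (∑ g ∈ A, ‖if g ∈ A then (1:ℂ) else 0‖) = a := by
          rw [ha]
          rw [Finset.sum_congr rfl (fun g hg => by rw [if_pos hg, norm_one])]
          simp
        rw [this, Real.sqrt_sq ha_pos.le]
    -- combine
    have hRDf := hRD f hfsupp
    have hchain : a ≤ C * Real.sqrt (W ^ 2 * (D.card : ℝ) * a) :=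
      hlow.trans (hRDf.trans (mul_le_mul_of_nonneg_left hup hC.le))
    have hX0 : (0:ℝ) ≤ W ^ 2 * (D.card : ℝ) * a := by positivity
    have hsq : a ^ 2 ≤ C ^ 2 * (W ^ 2 * (D.card : ℝ) * a) := by
      have h1 : a ^ 2 ≤ (C * Real.sqrt (W ^ 2 * (D.card : ℝ) * a)) ^ 2 :=
        pow_le_pow_left₀ ha_pos.le hchain 2
      rwa [mul_pow, Real.sq_sqrt hX0] at h1
    have hfinal : a ≤ C ^ 2 * (D.card : ℝ) * W ^ 2 := by nlinarith
    have hWsq : W ^ 2 = (1 + (R:ℝ) + L) ^ (2 * s₁) := by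
      rw [hW, ← Real.rpow_natCast ((1 + (R:ℝ) + L) ^ s₁) 2, ← Real.rpow_mul hbase_pos.le]
      norm_num [mul_comm]
    rw [hAn]
    calc a ≤ C ^ 2 * (D.card : ℝ) * W ^ 2 := hfinal
      _ = C ^ 2 * (D.card : ℝ) * (1 + (R:ℝ) + L) ^ (2 * s₁) := by rw [hWsq]
  have main2 : ∀ R : ℕ,
      ({g : G | g ∈ H ∧ ℓ g ≤ R}.ncard : ℝ) ≤
        C ^ 2 * ({g : G | g ∈ H ∧ t * g * t⁻¹ ∈ H}.ncard : ℝ) *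
          (1 + (R : ℝ) + 2 * (ℓ t : ℝ)) ^ (2 * s₁) := by
    intro R
    rw [hMD]
    refine (main R).trans ?_
    have hexp : (1 + (R:ℝ) + L) ^ (2 * s₁) ≤ (1 + (R:ℝ) + 2 * (ℓ t : ℝ)) ^ (2 * s₁) := by
      apply Real.rpow_le_rpow (by positivity) _ (by positivity)
      rw [← hL]
      linarith [hL0]
    exact mul_le_mul_of_nonneg_left hexp (by positivity)
  refine ⟨main2, fun _ => ?_⟩
  refine ⟨C ^ 2 * (D.card : ℝ) * (1 + 2 * L) ^ (2 * s₁), 2 * s₁, by positivity, by positivity, ?_⟩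
  intro R
  have hR0 : (0:ℝ) ≤ (R:ℝ) := Nat.cast_nonneg R
  have hle : 1 + (R:ℝ) + L ≤ (1 + 2 * L) * (1 + (R:ℝ)) := by nlinarith [mul_nonneg hL0 hR0]
  have hstep : (1 + (R:ℝ) + L) ^ (2 * s₁) ≤ ((1 + 2 * L) * (1 + (R:ℝ))) ^ (2 * s₁) :=
    Real.rpow_le_rpow (by positivity) hle (by positivity)
  have hmul : ((1 + 2 * L) * (1 + (R:ℝ))) ^ (2 * s₁)
      = (1 + 2 * L) ^ (2 * s₁) * (1 + (R:ℝ)) ^ (2 * s₁) :=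
    Real.mul_rpow (by positivity) (by positivity)
  calc ({g : G | g ∈ H ∧ ℓ g ≤ R}.ncard : ℝ)
      ≤ C ^ 2 * (D.card : ℝ) * (1 + (R:ℝ) + L) ^ (2 * s₁) := main R
    _ ≤ C ^ 2 * (D.card : ℝ) * ((1 + 2 * L) * (1 + (R:ℝ))) ^ (2 * s₁) :=
        mul_le_mul_of_nonneg_left hstep (by positivity)
    _ = (C ^ 2 * (D.card : ℝ) * (1 + 2 * L) ^ (2 * s₁)) * (1 + (R:ℝ)) ^ (2 * s₁) := by
        rw [hmul]; ring
end
end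

section
/- Let H and L be groups and let K = H ∗ L be their free product, with H and L identified with their images under the canonical injections into K. If k ∈ L and k ≠ e, then H ∩ k⁻¹Hk = {e} (the intersection of H with its conjugate by k is the trivial subgroup of K). -/
open Monoid

/-- In a free product `CoprodI G`, if `i ≠ j`, `k ≠ 1`, and
`of k * of h = of h' * of k`, then `h = 1`. -/
theorem coprodI_aux {ι : Type*} {G : ι → Type*} [∀ i, Group (G i)] {i j : ι} (hij : i ≠ j)
    {h h' : G i} {k : G j} (hk : k ≠ 1)
    (heq : CoprodI.of k * CoprodI.of h = CoprodI.of h' * CoprodI.of k) : h = 1 := by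
  classical
  by_contra hh
  by_cases hh' : h' = 1
  · subst hh'
    rw [map_one, one_mul] at heq
    exact hh (CoprodI.of_injective i
      (by rw [map_one]; exact mul_left_cancel (heq.trans (mul_one _).symm)))
  · have e0i : (CoprodI.Word.empty : CoprodI.Word G).fstIdx ≠ some i := by
      simp [CoprodI.Word.fstIdx]
    have e0j : (CoprodI.Word.empty : CoprodI.Word G).fstIdx ≠ some j := by
      simp [CoprodI.Word.fstIdx]
    have eci : (CoprodI.Word.cons h CoprodI.Word.empty e0i hh).fstIdx ≠ some j := by
      simp only [CoprodI.Word.fstIdx_cons, ne_eq, Option.some.injEq]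
      exact hij
    have ecj : (CoprodI.Word.cons k CoprodI.Word.empty e0j hk).fstIdx ≠ some i := by
      simp only [CoprodI.Word.fstIdx_cons, ne_eq, Option.some.injEq]
      exact Ne.symm hij
    have hw : CoprodI.Word.cons k (CoprodI.Word.cons h CoprodI.Word.empty e0i hh) eci hk
        = CoprodI.Word.cons h' (CoprodI.Word.cons k CoprodI.Word.empty e0j hk) ecj hh' := by
      simp only [CoprodI.Word.cons_eq_smul]
      rw [← mul_smul, ← mul_smul, heq]
    have := congrArg CoprodI.Word.toList hw
    simp only [CoprodI.Word.cons_toList, List.cons.injEq] at this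
    exact hij (Sigma.ext_iff.mp this.1).1.symm

private def Fam (H : Type u) (L : Type v) : Bool → Type (max u v) :=
  fun b => Bool.rec (motive := fun _ => Type (max u v)) (ULift L) (ULift H) b

private instance famGroup {H : Type u} {L : Type v} [Group H] [Group L] :
    ∀ b, Group (Fam H L b) :=
  fun b => Bool.rec (motive := fun b => Group (Fam H L b))
    (inferInstanceAs (Group (ULift L))) (inferInstanceAs (Group (ULift H))) b

/-- Let `K = H ∗ L` be a free product of groups (with `H` and `L`
identified with their images under the canonical injections). If `k ∈ L` and
`k ≠ 1`, then `H ∩ k⁻¹Hk = {1}` in `H ∗ L`. -/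
theorem statement11 {H L : Type*} [Group H] [Group L] (k : L) (hk : k ≠ 1) :
    ((Monoid.Coprod.inl : H →* Monoid.Coprod H L).range) ⊓
      Subgroup.map
        (MulAut.conj (((Monoid.Coprod.inr : L →* Monoid.Coprod H L) k)⁻¹)).toMonoidHom
        ((Monoid.Coprod.inl : H →* Monoid.Coprod H L).range) = ⊥ := by
  rw [eq_bot_iff]
  rintro x ⟨⟨h, rfl⟩, ⟨y, ⟨h', rfl⟩, hy⟩⟩
  simp only [MulEquiv.coe_toMonoidHom, MulAut.conj_apply, inv_inv] at hy
  -- hy : (inr k)⁻¹ * inl h' * inr k = inl h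
  have key : Coprod.inr k * Coprod.inl h = Coprod.inl h' * Coprod.inr k := by
    rw [← hy]; group
  let φ : Coprod H L →* CoprodI (Fam H L) :=
    Coprod.lift
      ((CoprodI.of (M := Fam H L) (i := true)).comp
        (MulEquiv.ulift (α := H)).symm.toMonoidHom)
      ((CoprodI.of (M := Fam H L) (i := false)).comp
        (MulEquiv.ulift (α := L)).symm.toMonoidHom)
  have hφ := congrArg φ key
  simp only [φ, map_mul, Coprod.lift_apply_inl, Coprod.lift_apply_inr,
    MonoidHom.comp_apply] at hφ
  have hk' : ((MulEquiv.ulift (α := L)).symm k : Fam H L false) ≠ 1 := fun hc =>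
    hk ((MulEquiv.ulift (α := L)).symm.injective (hc.trans (map_one _).symm))
  have h1 := coprodI_aux (G := Fam H L) (i := true) (j := false)
    (by simp) hk' hφ
  have h2 : h = 1 := congrArg ULift.down h1
  subst h2
  simp [Subgroup.mem_bot]
end
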